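/- arXiv:2304.14980 — 7 statements merged into one kernel-verified Lean document; each statement's English description precedes it below -/
import Mathlib

section
/- Let x, y be candidates in an election with n ≥ 2 candidates. If x ≥_α y for some α with 1 − 1/n < α ≤ 1, then x is ranked before y in every Kemeny ranking of the election. -/
open Finset

/-- A ranking (strict total order) of the finite candidate set `C`, encoded as a
bijection with `Fin (Fintype.card C)`; position `0` is the top of the ranking. -/
abbrev Ranking (C : Type*) [Fintype C] := C ≃ Fin (Fintype.card C)

section Defs

variable {C : Type*} [Fintype C] [DecidableEq C]

/-- `x` is ranked (strictly) before `y` in the ranking `π`. -/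
def Before (π : Ranking C) (x y : C) : Prop := π x < π y

instance (π : Ranking C) (x y : C) : Decidable (Before π x y) :=
  inferInstanceAs (Decidable (π x < π y))

instance : DecidableEq (Ranking C) := fun a b =>
  decidable_of_iff (∀ i, a i = b i) Equiv.ext_iff.symm

/-- The top-ranked element of `S ⊆ C` according to `π` (`⊤` if `S = ∅`). -/
def topS (π : Ranking C) (S : Finset C) : WithTop C :=
  (S.image π).min.map (fun i => π.symm i)

/-- The `k`-wise Kendall-tau distance between two rankings: the number of subsets
`S ⊆ C` with `|S| ≤ k` on whose top element the two rankings disagree (subsets of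
size at most one never contribute). -/
def kDist (k : ℕ) (π σ : Ranking C) : ℕ :=
  ((Finset.univ : Finset C).powerset.filter
    (fun S => S.card ≤ k ∧ topS π S ≠ topS σ S)).card

/-- The `k`-wise Kendall-tau distance from a ranking to a voting profile. -/
def kDistV (k : ℕ) (π : Ranking C) (V : Multiset (Ranking C)) : ℕ :=
  (V.map (fun σ => kDist k π σ)).sum

/-- `π` is a `k`-wise median (for `k = 2`: a Kemeny ranking) of the profile `V`. -/
def IsKMedian (k : ℕ) (V : Multiset (Ranking C)) (π : Ranking C) : Prop :=
  ∀ σ : Ranking C, kDistV k π V ≤ kDistV k σ V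

/-- The number of votes of `V` in which `x` is ranked before `y`. -/
def votesBefore (V : Multiset (Ranking C)) (x y : C) : ℕ :=
  Multiset.card (V.filter (fun v => Before v x y))

/-- `x ≥ₛ y` : `x` is ranked before `y` in at least `s·|V|` of the votes. -/
def AtLeastRatio (V : Multiset (Ranking C)) (s : ℝ) (x y : C) : Prop :=
  s * (Multiset.card V : ℝ) ≤ (votesBefore V x y : ℝ)

/-- `x >ₛ y` : `x` is ranked before `y` in more than `s·|V|` of the votes. -/
def MoreThanRatio (V : Multiset (Ranking C)) (s : ℝ) (x y : C) : Prop :=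
  s * (Multiset.card V : ℝ) < (votesBefore V x y : ℝ)

noncomputable instance (V : Multiset (Ranking C)) (s : ℝ) (x y : C) :
    Decidable (AtLeastRatio V s x y) :=
  inferInstanceAs (Decidable (s * (Multiset.card V : ℝ) ≤ (votesBefore V x y : ℝ)))

/-- `x` is a non-dirty candidate w.r.t. threshold `s`. -/
def NonDirty (V : Multiset (Ranking C)) (s : ℝ) (x : C) : Prop :=
  ∀ y : C, y ≠ x → AtLeastRatio V s x y ∨ AtLeastRatio V s y x

/-- `x` is ranked first (is the winner) in the ranking `π`. -/
def RankedFirst (π : Ranking C) (x : C) : Prop :=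
  ∀ y : C, y ≠ x → Before π x y

instance (π : Ranking C) (x : C) : Decidable (RankedFirst π x) :=
  inferInstanceAs (Decidable (∀ y : C, y ≠ x → Before π x y))

end Defs

/-!
Only pairwise comparisons matter: the 2-wise distance from a ranking `ρ` to the profile is
`∑ N(b, a)` over the pairs with `a` before `b` in `ρ`, where `N(a, b)` counts the votes putting
`a` before `b`. If a Kemeny ranking `π` put `y` before `x`, with the set `T` of candidates in
between, then neither moving `x` up to just before `y` nor moving `y` down to just after `x`
lowers the score. Adding the two inequalities gives
`0 ≤ 2 (N(y, x) - N(x, y)) + ∑_{z ∈ T} (N(z, x) - N(x, z) + N(y, z) - N(z, y))`.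
Since `N(x, y) ≤ N(x, z) + N(z, y)`, every summand is at most `2 N(y, x)`, and `|T| ≤ n - 2`;
hence `n N(x, y) ≤ (n - 1) |V|`, which contradicts `N(x, y) ≥ α |V| > (1 - 1/n) |V|`.
-/

section

variable {C : Type*} [Fintype C]

theorem votesBefore_cons (σ : Ranking C) (V : Multiset (Ranking C)) (a b : C) :
    votesBefore (σ ::ₘ V) a b = votesBefore V a b + if Before σ a b then 1 else 0 := by
  by_cases h : Before σ a b <;> simp [votesBefore, h]

theorem votesBefore_add_votesBefore_le (V : Multiset (Ranking C)) (a b : C) :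
    votesBefore V a b + votesBefore V b a ≤ Multiset.card V := by
  induction V using Multiset.induction_on with
  | empty => simp [votesBefore]
  | cons σ V ih =>
    rw [votesBefore_cons, votesBefore_cons, Multiset.card_cons]
    have := lt_asymm (a := σ a) (b := σ b)
    split_ifs <;> simp only [Before] at * <;> omega

theorem votesBefore_le_add (V : Multiset (Ranking C)) (x y z : C) :
    votesBefore V x y ≤ votesBefore V x z + votesBefore V z y := by
  induction V using Multiset.induction_on with
  | empty => simp [votesBefore]
  | cons σ V ih =>
    rw [votesBefore_cons, votesBefore_cons, votesBefore_cons]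
    split_ifs <;> simp only [Before] at * <;> omega

theorem topS_eq_of_card_le_one (π σ : Ranking C) {S : Finset C} (hS : S.card ≤ 1) :
    topS π S = topS σ S := by
  obtain h | h := Nat.le_one_iff_eq_zero_or_eq_one.mp hS
  · simp [Finset.card_eq_zero.mp h, topS]
  · obtain ⟨a, rfl⟩ := Finset.card_eq_one.mp h
    simp [topS]

theorem exists_ranking_before_iff {α : Type*} [LinearOrder α] {f : C → α}
    (hf : Function.Injective f) : ∃ ρ : Ranking C, ∀ a b, Before ρ a b ↔ f a < f b := by
  let _ : LinearOrder C := LinearOrder.lift' f hf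
  let e := Fintype.orderIsoFinOfCardEq C rfl
  exact ⟨e.symm.toEquiv, fun a b => e.symm.lt_iff_lt⟩

end

section

variable {C : Type*} [Fintype C] [DecidableEq C]

/-- Positions are doubled, so that the odd key `k` puts `w` strictly between two candidates. -/
theorem exists_ranking_move (π : Ranking C) (w : C) {k : ℤ} (hk : Odd k) :
    ∃ ρ : Ranking C, ∀ a b, Before ρ a b ↔
      (if a = w then k else 2 * (π a : ℤ)) < (if b = w then k else 2 * (π b : ℤ)) := by
  obtain ⟨m, rfl⟩ := hk
  refine exists_ranking_before_iff fun a b hab => ?_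
  split_ifs at hab with ha hb hb
  · exact ha.trans hb.symm
  · omega
  · omega
  · exact π.injective (Fin.ext (by omega))

theorem topS_pair_of_lt {π : Ranking C} {a b : C} (h : π a < π b) : topS π {a, b} = a := by
  simp [topS, h.le]

theorem kDist_two_eq_card (ρ σ : Ranking C) :
    kDist 2 ρ σ = #{p : C × C | Before ρ p.1 p.2 ∧ Before σ p.2 p.1} := by
  symm
  refine Finset.card_bij (fun p _ => {p.1, p.2}) ?_ ?_ ?_
  · intro p hp
    rw [Finset.mem_filter_univ] at hp
    simp only [Finset.mem_filter, Finset.mem_powerset, Finset.subset_univ, true_and]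
    refine ⟨Finset.card_le_two, ?_⟩
    rw [topS_pair_of_lt hp.1, Finset.pair_comm, topS_pair_of_lt hp.2, Ne, WithTop.coe_inj]
    intro h
    exact lt_irrefl _ (h ▸ hp.1)
  · intro p hp q hq hpq
    rw [Finset.mem_filter_univ] at hp hq
    have h1 := topS_pair_of_lt hp.1
    have h2 := topS_pair_of_lt hp.2
    rw [hpq, topS_pair_of_lt hq.1, WithTop.coe_inj] at h1
    rw [Finset.pair_comm, hpq, Finset.pair_comm, topS_pair_of_lt hq.2, WithTop.coe_inj] at h2
    exact Prod.ext h1.symm h2.symm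
  · intro S hS
    simp only [Finset.mem_filter, Finset.mem_powerset, Finset.subset_univ, true_and] at hS
    obtain ⟨hcard, hne⟩ := hS
    obtain ⟨a, b, hab, rfl⟩ : ∃ a b, a ≠ b ∧ S = {a, b} := by
      refine Finset.card_eq_two.mp (le_antisymm hcard (not_lt.mp fun h => hne ?_))
      exact topS_eq_of_card_le_one ρ σ (Nat.le_of_lt_succ h)
    rcases (ρ.injective.ne hab).lt_or_gt with hρ | hρ
    · refine ⟨(a, b), (Finset.mem_filter_univ _).mpr ⟨hρ, ?_⟩, rfl⟩
      by_contra hσ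
      have hσ' := (not_lt.mp hσ).lt_of_ne (σ.injective.ne hab)
      exact hne (by rw [topS_pair_of_lt hρ, topS_pair_of_lt hσ'])
    · refine ⟨(b, a), (Finset.mem_filter_univ _).mpr ⟨hρ, ?_⟩, Finset.pair_comm b a⟩
      by_contra hσ
      have hσ' := (not_lt.mp hσ).lt_of_ne (σ.injective.ne hab.symm)
      rw [Finset.pair_comm] at hne
      exact hne (by rw [topS_pair_of_lt hρ, topS_pair_of_lt hσ'])

theorem kDistV_two_eq (ρ : Ranking C) (V : Multiset (Ranking C)) :
    kDistV 2 ρ V = ∑ a, ∑ b, if Before ρ a b then votesBefore V b a else 0 := by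
  induction V using Multiset.induction_on with
  | empty => simp [kDistV, votesBefore]
  | cons σ V ih =>
    rw [kDistV, Multiset.map_cons, Multiset.sum_cons, ← kDistV, ih, kDist_two_eq_card,
      Finset.card_filter, Fintype.sum_prod_type, ← Finset.sum_add_distrib]
    refine Finset.sum_congr rfl fun a _ => ?_
    rw [← Finset.sum_add_distrib]
    refine Finset.sum_congr rfl fun b _ => ?_
    rw [votesBefore_cons]
    by_cases hρ : Before ρ a b <;> simp [hρ, add_comm]

theorem kDistV_two_sub_kDistV_two (π ρ : Ranking C) (V : Multiset (Ranking C)) :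
    (kDistV 2 ρ V : ℤ) - kDistV 2 π V = ∑ a, ∑ b,
      if Before π a b ∧ Before ρ b a then (votesBefore V a b : ℤ) - votesBefore V b a else 0 := by
  have hpair (a b : C) : ((if Before ρ a b then votesBefore V b a else 0 : ℕ) : ℤ) -
      (if Before π a b then votesBefore V b a else 0 : ℕ) =
      (if Before π b a ∧ Before ρ a b then (votesBefore V b a : ℤ) else 0) -
      (if Before π a b ∧ Before ρ b a then (votesBefore V b a : ℤ) else 0) := by
    rcases eq_or_ne a b with rfl | hab
    · simp [Before]
    have hπ := π.injective.ne hab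
    have hρ := ρ.injective.ne hab
    push_cast
    simp only [Before]
    split_ifs <;> omega
  rw [kDistV_two_eq, kDistV_two_eq, Nat.cast_sum, Nat.cast_sum, ← Finset.sum_sub_distrib]
  simp_rw [Nat.cast_sum, ← Finset.sum_sub_distrib, hpair, Finset.sum_sub_distrib]
  rw [Finset.sum_comm, ← Finset.sum_sub_distrib]
  refine Finset.sum_congr rfl fun a _ => ?_
  rw [← Finset.sum_sub_distrib]
  refine Finset.sum_congr rfl fun b _ => ?_
  split_ifs <;> simp

end

namespace IsKMedian

variable {C : Type*} [Fintype C] [DecidableEq C] {V : Multiset (Ranking C)} {π : Ranking C}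

theorem sum_flip_nonneg (hπ : IsKMedian 2 V π) (ρ : Ranking C) :
    0 ≤ ∑ a, ∑ b,
      if Before π a b ∧ Before ρ b a then (votesBefore V a b : ℤ) - votesBefore V b a else 0 := by
  rw [← kDistV_two_sub_kDistV_two, sub_nonneg]
  exact_mod_cast hπ ρ

theorem sum_moveBefore_nonneg (hπ : IsKMedian 2 V π) {u w : C} (huw : Before π u w) :
    0 ≤ ∑ z, if π u ≤ π z ∧ π z < π w then
      (votesBefore V z w : ℤ) - votesBefore V w z else 0 := by
  obtain ⟨ρ, hρ⟩ := exists_ranking_move π w (k := 2 * (π u : ℤ) - 1) ⟨π u - 1, by ring⟩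
  have hflip (a b : C) : (Before π a b ∧ Before ρ b a) ↔ b = w ∧ π u ≤ π a ∧ π a < π w := by
    rw [hρ]
    simp only [Before] at huw ⊢
    by_cases ha : a = w <;> by_cases hb : b = w <;>
      simp only [ha, hb, if_true, if_false, true_and, false_and, iff_false] <;> omega
  have := hπ.sum_flip_nonneg ρ
  simp_rw [hflip, ite_and, Finset.sum_ite_eq', Finset.mem_univ, if_true] at this
  simpa only [ite_and] using this

theorem sum_moveAfter_nonneg (hπ : IsKMedian 2 V π) {u w : C} (hwu : Before π w u) :
    0 ≤ ∑ z, if π w < π z ∧ π z ≤ π u then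
      (votesBefore V w z : ℤ) - votesBefore V z w else 0 := by
  obtain ⟨ρ, hρ⟩ := exists_ranking_move π w (k := 2 * (π u : ℤ) + 1) ⟨π u, rfl⟩
  have hflip (a b : C) : (Before π a b ∧ Before ρ b a) ↔ a = w ∧ π w < π b ∧ π b ≤ π u := by
    rw [hρ]
    simp only [Before] at hwu ⊢
    by_cases ha : a = w <;> by_cases hb : b = w <;>
      simp only [ha, hb, if_true, if_false, true_and, false_and, iff_false] <;> omega
  have := hπ.sum_flip_nonneg ρ
  simp_rw [hflip, ite_and] at this
  rw [Finset.sum_comm] at this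
  simp_rw [Finset.sum_ite_eq', Finset.mem_univ, if_true] at this
  simpa only [ite_and] using this

theorem card_mul_votesBefore_le (hπ : IsKMedian 2 V π) {x y : C} (hyx : Before π y x) :
    (Fintype.card C : ℤ) * votesBefore V x y ≤ (Fintype.card C - 1) * Multiset.card V := by
  set N : C → C → ℤ := fun a b => votesBefore V a b
  let t : C → ℤ := fun z =>
    (if π y ≤ π z ∧ π z < π x then N z x - N x z else 0) +
      (if π y < π z ∧ π z ≤ π x then N y z - N z y else 0)
  have hxy : x ≠ y := by
    rintro rfl
    exact lt_irrefl _ hyx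
  have hsum : 0 ≤ ∑ z, t z := by
    rw [Finset.sum_add_distrib]
    exact add_nonneg (hπ.sum_moveBefore_nonneg hyx) (hπ.sum_moveAfter_nonneg hyx)
  have hxy_terms : t x + t y = 2 * (N y x - N x y) := by
    simp only [t, Before] at hyx ⊢
    split_ifs <;> omega
  set R := ((univ : Finset C).erase x).erase y
  have hrest : ∀ z ∈ R, t z ≤ 2 * (Multiset.card V - N x y) := by
    intro z hz
    obtain ⟨hzy, hzx⟩ : z ≠ y ∧ z ≠ x := by simpa [R] using hz
    have hzx' := π.injective.ne hzx
    have hzy' := π.injective.ne hzy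
    have := votesBefore_add_votesBefore_le V z x
    have := votesBefore_add_votesBefore_le V y z
    have := votesBefore_add_votesBefore_le V x y
    have := votesBefore_le_add V x y z
    simp only [t, N]
    split_ifs <;> omega
  have hy : y ∈ (univ : Finset C).erase x := Finset.mem_erase.mpr ⟨hxy.symm, Finset.mem_univ y⟩
  have hsplit : ∑ z, t z = t x + (t y + ∑ z ∈ R, t z) := by
    rw [Finset.add_sum_erase _ t hy, Finset.add_sum_erase _ t (Finset.mem_univ x)]
  have hcard : (#R : ℤ) + 2 = Fintype.card C := by
    have h1 : #R + 1 = _ := Finset.card_erase_add_one hy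
    have h2 := Finset.card_erase_add_one (Finset.mem_univ x)
    rw [Finset.card_univ] at h2
    omega
  have hR := Finset.sum_le_card_nsmul R t _ hrest
  have hyx_le : N y x ≤ Multiset.card V - N x y := by
    have := votesBefore_add_votesBefore_le V x y
    simp only [N]
    omega
  rw [nsmul_eq_mul] at hR
  rw [← hcard]
  linarith

end IsKMedian

theorem stmt1_general {C : Type*} [Fintype C] [DecidableEq C]
    (V : Multiset (Ranking C)) (hV : V ≠ 0)
    (x y : C) (hxy : x ≠ y) (α : ℝ)
    (hα1 : 1 - 1 / (Fintype.card C : ℝ) < α)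
    (h : AtLeastRatio V α x y) :
    ∀ π : Ranking C, IsKMedian 2 V π → Before π x y := by
  intro π hπ
  by_contra hnot
  have hyx : Before π y x := (π.injective.ne hxy).lt_or_gt.resolve_left hnot
  have hscore : (Fintype.card C : ℝ) * votesBefore V x y ≤
      (Fintype.card C - 1) * Multiset.card V := by
    exact_mod_cast hπ.card_mul_votesBefore_le hyx
  have hV_pos : (0 : ℝ) < Multiset.card V := by exact_mod_cast Multiset.card_pos.mpr hV
  have hn_pos : (0 : ℝ) < Fintype.card C := by exact_mod_cast Fintype.card_pos_iff.mpr ⟨x⟩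
  have hnα : (Fintype.card C : ℝ) - 1 < Fintype.card C * α := by
    have := mul_lt_mul_of_pos_left hα1 hn_pos
    rwa [mul_sub, mul_one, mul_one_div_cancel hn_pos.ne'] at this
  unfold AtLeastRatio at h
  linarith [mul_lt_mul_of_pos_right hnα hV_pos, mul_le_mul_of_nonneg_left h hn_pos.le]

/-- If `x ≥_α y` with `1 - 1/n < α ≤ 1` in an election with `n ≥ 2`
candidates, then `x` is ranked before `y` in every Kemeny (2-wise median) ranking. -/
theorem stmt1 {C : Type*} [Fintype C] [DecidableEq C]
    (hn : 2 ≤ Fintype.card C)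
    (V : Multiset (Ranking C)) (hV : V ≠ 0)
    (x y : C) (hxy : x ≠ y) (α : ℝ)
    (hα1 : 1 - 1 / (Fintype.card C : ℝ) < α) (hα2 : α ≤ 1)
    (h : AtLeastRatio V α x y) :
    ∀ π : Ranking C, IsKMedian 2 V π → Before π x y :=
  stmt1_general V hV x y hxy α hα1 h
end

section
/- Let x be a candidate in an election with n ≥ 2 candidates. Suppose x ≥_α y for every candidate y ≠ x, where α > (3n−5)/(4n−6). Then x is ranked first in every 3-wise median of the election. In particular, if x ≥_{3/4} y for every candidate y ≠ x, then x is ranked first in every 3-wise median. -/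
open Finset

/-!
Suppose `x` is not first in a 3-wise median `π`, and let `π'` be `π` with `x` moved to the top.
The two rankings have different tops exactly on the sets `S ∋ x`, `|S| ≤ 3`, whose `π`-top is not
`x`. If `c(S)` votes rank `x` first on `S`, then `π'` disagrees with `|V| - c(S)` votes on `S` and
`π` with at least `c(S)`; a union bound gives `c(S) ≥ α|V|` on pairs and `c(S) ≥ (2α - 1)|V|` on
triples. If `b ≥ 1` candidates precede `x` in `π`, at least `b` pairs and at most `b(n - 2)`
triples are affected, and `α > (3n - 5)/(4n - 6)` is exactly what makes
`(2α - 1)·#pairs + (4α - 3)·#triples` positive, so `π'` is strictly closer to `V` than `π`.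
-/

namespace Fin

theorem cycleRange_le_cycleRange_iff {n : ℕ} {i j k : Fin n} (hi : i ≠ k) (hj : j ≠ k) :
    cycleRange k i ≤ cycleRange k j ↔ i ≤ j := by
  have hval : ∀ l ≠ k, (cycleRange k l : ℕ) = if l < k then (l : ℕ) + 1 else l := by
    intro l hl
    rcases hl.lt_or_gt with h | h
    · rw [coe_cycleRange_of_lt h, if_pos h]
    · rw [cycleRange_of_gt h, if_neg h.not_gt]
  rw [le_iff_val_le_val, le_iff_val_le_val, hval i hi, hval j hj]
  have := val_ne_of_ne hi
  have := val_ne_of_ne hj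
  split_ifs <;> simp only [lt_def] at * <;> omega

end Fin

section Rankings

variable {C : Type*} [Fintype C]

theorem topS_eq_of_forall_le (π : Ranking C) {S : Finset C} {a : C} (ha : a ∈ S)
    (h : ∀ y ∈ S, π a ≤ π y) : topS π S = a := by
  have hmin : (S.image π).min = π a :=
    le_antisymm (min_le (mem_image_of_mem π ha))
      (Finset.le_min fun b hb => by
        obtain ⟨y, hy, rfl⟩ := mem_image.mp hb
        exact WithTop.coe_le_coe.mpr (h y hy))
  simp [topS, hmin]

theorem exists_topS_eq (π : Ranking C) {S : Finset C} (hS : S.Nonempty) :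
    ∃ a ∈ S, topS π S = a ∧ ∀ y ∈ S, π a ≤ π y := by
  obtain ⟨a, ha, hmin⟩ := S.exists_min_image π hS
  exact ⟨a, ha, topS_eq_of_forall_le π ha hmin, hmin⟩

theorem Before.ne {π : Ranking C} {a b : C} (h : Before π a b) : a ≠ b := by
  rintro rfl
  exact lt_irrefl _ h

/-- `π` with `x` moved to the top, the relative order of the other candidates unchanged. -/
def moveTop (π : Ranking C) (x : C) : Ranking C := π.trans (Fin.cycleRange (π x))

theorem moveTop_apply_self (π : Ranking C) (x : C) : (moveTop π x x : ℕ) = 0 := by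
  simp [moveTop, Fin.coe_cycleRange_of_le]

theorem moveTop_le_moveTop_iff (π : Ranking C) {x y z : C} (hy : y ≠ x) (hz : z ≠ x) :
    moveTop π x y ≤ moveTop π x z ↔ π y ≤ π z :=
  Fin.cycleRange_le_cycleRange_iff (π.injective.ne hy) (π.injective.ne hz)

theorem topS_moveTop_of_mem (π : Ranking C) {x : C} {S : Finset C} (hx : x ∈ S) :
    topS (moveTop π x) S = x :=
  topS_eq_of_forall_le _ hx fun y _ => by
    rw [Fin.le_iff_val_le_val, moveTop_apply_self]; exact Nat.zero_le _

theorem topS_moveTop_of_notMem (π : Ranking C) {x : C} {S : Finset C} (hx : x ∉ S) :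
    topS (moveTop π x) S = topS π S := by
  rcases S.eq_empty_or_nonempty with rfl | hS
  · simp [topS]
  obtain ⟨a, ha, htop, hmin⟩ := exists_topS_eq π hS
  rw [htop]
  exact topS_eq_of_forall_le _ ha fun y hy =>
    (moveTop_le_moveTop_iff π (ne_of_mem_of_not_mem ha hx) (ne_of_mem_of_not_mem hy hx)).mpr
      (hmin y hy)

end Rankings

section Distance

variable {C : Type*} [Fintype C] [DecidableEq C]

def disagreements (ρ : Ranking C) (V : Multiset (Ranking C)) (S : Finset C) : ℕ :=
  V.countP fun σ => topS ρ S ≠ topS σ S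

theorem kDistV_eq_sum_disagreements (k : ℕ) (ρ : Ranking C) (V : Multiset (Ranking C)) :
    kDistV k ρ V = ∑ S ∈ univ.powerset.filter (·.card ≤ k), disagreements ρ V S := by
  induction V using Multiset.induction_on with
  | empty => simp [kDistV, disagreements]
  | cons σ V ih =>
    simp only [kDistV, disagreements, Multiset.map_cons, Multiset.sum_cons, Multiset.countP_cons,
      sum_add_distrib] at ih ⊢
    rw [ih, add_comm, kDist, ← filter_filter, card_filter]

theorem kDistV_lt_kDistV_of_sum_lt {k : ℕ} {π π' : Ranking C} {V : Multiset (Ranking C)}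
    (D : Finset (Finset C)) (hDk : ∀ S ∈ D, S.card ≤ k)
    (hagree : ∀ S : Finset C, S.card ≤ k → S ∉ D → topS π S = topS π' S)
    (h : ∑ S ∈ D, disagreements π' V S < ∑ S ∈ D, disagreements π V S) :
    kDistV k π' V < kDistV k π V := by
  have hsub : D ⊆ univ.powerset.filter (·.card ≤ k) := fun S hS => by simp [hDk S hS]
  have hrest : ∑ S ∈ univ.powerset.filter (·.card ≤ k) \ D, disagreements π' V S =
      ∑ S ∈ univ.powerset.filter (·.card ≤ k) \ D, disagreements π V S :=
    sum_congr rfl fun S hS => by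
      obtain ⟨hSk, hSD⟩ := mem_sdiff.mp hS
      rw [disagreements, disagreements, hagree S (mem_filter.mp hSk).2 hSD]
  rw [kDistV_eq_sum_disagreements, kDistV_eq_sum_disagreements, ← sum_sdiff hsub,
    ← sum_sdiff hsub (f := disagreements π V), hrest]
  omega

end Distance

section Votes

variable {C : Type*} [Fintype C] [DecidableEq C]

def topVotes (V : Multiset (Ranking C)) (S : Finset C) (x : C) : ℕ :=
  V.countP fun σ => topS σ S = x

theorem disagreements_add_topVotes {ρ : Ranking C} {S : Finset C} {x : C}
    (h : topS ρ S = x) (V : Multiset (Ranking C)) :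
    disagreements ρ V S + topVotes V S x = Multiset.card V := by
  rw [Multiset.card_eq_countP_add_countP (fun σ => topS σ S = x), add_comm, disagreements,
    topVotes, h]
  simp only [ne_comm]

theorem topVotes_le_disagreements {ρ : Ranking C} {S : Finset C} {x : C}
    (h : topS ρ S ≠ x) (V : Multiset (Ranking C)) :
    topVotes V S x ≤ disagreements ρ V S := by
  simp only [topVotes, disagreements, Multiset.countP_eq_card_filter]
  exact Multiset.card_le_card (Multiset.monotone_filter_right V fun σ hσ => by rwa [hσ])

theorem countP_topS_ne_le_sum {S : Finset C} {x : C} (hx : x ∈ S)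
    (V : Multiset (Ranking C)) :
    V.countP (fun σ => topS σ S ≠ x) ≤
      ∑ y ∈ S.erase x, V.countP fun σ => ¬Before σ x y := by
  induction V using Multiset.induction_on with
  | empty => simp
  | cons σ V ih =>
    simp only [Multiset.countP_cons, sum_add_distrib]
    refine add_le_add ih ?_
    split_ifs with hσ
    · obtain ⟨a, ha, htop, hmin⟩ := exists_topS_eq σ ⟨x, hx⟩
      have hax : a ≠ x := by rintro rfl; exact hσ htop
      refine le_trans ?_ (single_le_sum (f := fun y => if ¬Before σ x y then 1 else 0)
        (fun _ _ => Nat.zero_le _) (mem_erase.mpr ⟨hax, ha⟩))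
      simp [Before, hmin x hx]
    · exact Nat.zero_le _

theorem topVotes_ge {V : Multiset (Ranking C)} {S : Finset C} {x : C} {α : ℝ}
    (hx : x ∈ S) (hα : ∀ y ∈ S, y ≠ x → AtLeastRatio V α x y) :
    (1 - ((S.card : ℝ) - 1) * (1 - α)) * Multiset.card V ≤ topVotes V S x := by
  have hsplit : (Multiset.card V : ℝ) =
      topVotes V S x + V.countP (fun σ => topS σ S ≠ x) := by
    exact_mod_cast Multiset.card_eq_countP_add_countP (fun σ => topS σ S = x) V
  have hlose : ∀ y ∈ S.erase x, (V.countP (fun σ => ¬Before σ x y) : ℝ) ≤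
      (1 - α) * Multiset.card V := by
    intro y hy
    have hy' := hα y (mem_of_mem_erase hy) (ne_of_mem_erase hy)
    have hcount : (Multiset.card V : ℝ) =
        votesBefore V x y + V.countP (fun σ => ¬Before σ x y) := by
      rw [votesBefore, ← Multiset.countP_eq_card_filter]
      exact_mod_cast Multiset.card_eq_countP_add_countP (fun σ => Before σ x y) V
    rw [AtLeastRatio] at hy'
    linarith
  have hunion : (V.countP (fun σ => topS σ S ≠ x) : ℝ) ≤
      ((S.card : ℝ) - 1) * ((1 - α) * Multiset.card V) := by
    have hcard : ((S.erase x).card : ℝ) = S.card - 1 := by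
      rw [← card_erase_add_one hx, Nat.cast_add, Nat.cast_one, add_sub_cancel_right]
    calc (V.countP (fun σ => topS σ S ≠ x) : ℝ)
        ≤ ∑ y ∈ S.erase x, (V.countP fun σ => ¬Before σ x y : ℝ) := by
          exact_mod_cast countP_topS_ne_le_sum hx V
      _ ≤ ((S.card : ℝ) - 1) * ((1 - α) * Multiset.card V) := by
          rw [← hcard, ← nsmul_eq_mul]
          exact sum_le_card_nsmul _ _ _ hlose
  linarith

end Votes

section Counting

variable {C : Type*} [Fintype C] [DecidableEq C]

/-- Moving `x` to the top of `π` changes the top element of exactly these sets of size `≤ k`. -/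
def nonTopSets (π : Ranking C) (x : C) (k : ℕ) : Finset (Finset C) :=
  univ.powerset.filter fun S => S.card ≤ k ∧ x ∈ S ∧ topS π S ≠ x

theorem mem_nonTopSets {π : Ranking C} {x : C} {k : ℕ} {S : Finset C} :
    S ∈ nonTopSets π x k ↔ S.card ≤ k ∧ x ∈ S ∧ topS π S ≠ x := by
  simp [nonTopSets]

theorem exists_before_of_mem_nonTopSets {π : Ranking C} {x : C} {k : ℕ} {S : Finset C}
    (hS : S ∈ nonTopSets π x k) : ∃ a ∈ S, topS π S = a ∧ Before π a x := by
  obtain ⟨-, hx, hne⟩ := mem_nonTopSets.mp hS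
  obtain ⟨a, ha, htop, hmin⟩ := exists_topS_eq π ⟨x, hx⟩
  have hax : a ≠ x := by rintro rfl; exact hne htop
  exact ⟨a, ha, htop, (hmin x hx).lt_of_ne (π.injective.ne hax)⟩

theorem two_le_card_of_mem_nonTopSets {π : Ranking C} {x : C} {k : ℕ} {S : Finset C}
    (hS : S ∈ nonTopSets π x k) : 2 ≤ S.card := by
  obtain ⟨a, ha, -, hax⟩ := exists_before_of_mem_nonTopSets hS
  exact one_lt_card.mpr ⟨a, ha, x, (mem_nonTopSets.mp hS).2.1, hax.ne⟩

theorem pair_mem_nonTopSets {π : Ranking C} {x y : C} {k : ℕ} (hk : 2 ≤ k)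
    (hy : Before π y x) : {x, y} ∈ nonTopSets π x k := by
  have htop : topS π {x, y} = y := topS_eq_of_forall_le π (by simp) fun z hz => by
    rcases mem_insert.mp hz with rfl | hz
    · exact hy.le
    · rw [mem_singleton.mp hz]
  refine mem_nonTopSets.mpr ⟨(card_le_two).trans hk, by simp, ?_⟩
  rw [htop]
  exact WithTop.coe_injective.ne hy.ne

theorem card_before_le_card_pairs (π : Ranking C) (x : C) {k : ℕ} (hk : 2 ≤ k) :
    (univ.filter (Before π · x)).card ≤ ((nonTopSets π x k).filter (·.card = 2)).card := by
  have hinj : Set.InjOn (fun y => ({x, y} : Finset C)) (univ.filter (Before π · x)) := by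
    intro a ha b hb hab
    have hax : a ∉ ({x} : Finset C) := by simpa using (mem_filter.mp ha).2.ne
    rw [← insert_inj hax]
    simpa only [pair_comm] using hab
  rw [← card_image_of_injOn hinj]
  refine card_le_card fun S hS => ?_
  obtain ⟨y, hy, rfl⟩ := mem_image.mp hS
  have hy := (mem_filter.mp hy).2
  exact mem_filter.mpr ⟨pair_mem_nonTopSets hk hy, card_pair hy.ne.symm⟩

theorem card_triples_le (π : Ranking C) (x : C) (k : ℕ) :
    ((nonTopSets π x k).filter (·.card = 3)).card ≤
      (univ.filter (Before π · x)).card * (Fintype.card C - 2) := by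
  have hsub : (nonTopSets π x k).filter (·.card = 3) ⊆ (univ.filter (Before π · x)).biUnion
      fun a => (univ \ {x, a}).image fun z => insert z {x, a} := by
    intro S hS
    obtain ⟨hSD, hS3⟩ := mem_filter.mp hS
    obtain ⟨a, ha, -, hax⟩ := exists_before_of_mem_nonTopSets hSD
    have hpair : ({x, a} : Finset C) ⊆ S :=
      insert_subset (mem_nonTopSets.mp hSD).2.1 (singleton_subset_iff.mpr ha)
    obtain ⟨z, hz, rfl⟩ := exists_eq_insert_iff.mpr
      ⟨hpair, by rw [hS3, card_pair hax.ne.symm]⟩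
    exact mem_biUnion.mpr ⟨a, by simpa using hax, mem_image.mpr ⟨z, by simpa using hz, rfl⟩⟩
  refine (card_le_card hsub).trans (card_biUnion_le_card_mul _ _ _ fun a ha => ?_)
  have hax : a ≠ x := (mem_filter.mp ha).2.ne
  calc _ ≤ (univ \ {x, a}).card := card_image_le
    _ = Fintype.card C - 2 := by
        rw [card_sdiff_of_subset (subset_univ _), card_univ, card_pair hax.symm]

end Counting

theorem weighted_pairs_triples_pos {n α p t : ℝ} (hn : 2 ≤ n)
    (hα : (3 * n - 5) / (4 * n - 6) < α) (hp : 1 ≤ p) (ht : 0 ≤ t) (htp : t ≤ p * (n - 2)) :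
    0 < p * (2 * α - 1) + t * (4 * α - 3) := by
  have hα' : 3 * n - 5 < α * (4 * n - 6) := (div_lt_iff₀ (by linarith)).mp hα
  rcases le_or_gt 3 (4 * α) with h | h
  · nlinarith
  · nlinarith [mul_le_mul_of_nonneg_left htp (by linarith : (0 : ℝ) ≤ 3 - 4 * α)]

section Median

variable {C : Type*} [Fintype C] [DecidableEq C]

theorem sum_nonTopSets_weight_pos {π : Ranking C} {x y : C} (hy : Before π y x) {α : ℝ}
    (hα : (3 * (Fintype.card C : ℝ) - 5) / (4 * (Fintype.card C : ℝ) - 6) < α) :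
    0 < ∑ S ∈ nonTopSets π x 3, (1 - 2 * ((S.card : ℝ) - 1) * (1 - α)) := by
  set P := (nonTopSets π x 3).filter (·.card = 2)
  set T := (nonTopSets π x 3).filter (·.card = 3)
  have hT : (nonTopSets π x 3).filter (¬·.card = 2) = T :=
    filter_congr fun S hS => by
      have := two_le_card_of_mem_nonTopSets hS
      have := (mem_nonTopSets.mp hS).1
      omega
  have hconst : ∀ U : Finset (Finset C), ∀ c : ℕ, (∀ S ∈ U, S.card = c) →
      ∑ S ∈ U, (1 - 2 * ((S.card : ℝ) - 1) * (1 - α)) =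
        U.card * (1 - 2 * ((c : ℝ) - 1) * (1 - α)) := fun U c hU => by
    rw [sum_congr rfl fun S hS => by rw [hU S hS], sum_const, nsmul_eq_mul]
  have hsum : ∑ S ∈ nonTopSets π x 3, (1 - 2 * ((S.card : ℝ) - 1) * (1 - α)) =
      P.card * (2 * α - 1) + T.card * (4 * α - 3) := by
    rw [← sum_filter_add_sum_filter_not _ (·.card = 2), hT,
      hconst P 2 fun S hS => (mem_filter.mp hS).2, hconst T 3 fun S hS => (mem_filter.mp hS).2]
    norm_num
    ring
  have hn : 2 ≤ Fintype.card C := one_lt_card.mpr ⟨y, mem_univ _, x, mem_univ _, hy.ne⟩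
  have hnR : (2 : ℝ) ≤ Fintype.card C := by exact_mod_cast hn
  have hB : 1 ≤ (univ.filter (Before π · x)).card := card_pos.mpr ⟨y, by simpa using hy⟩
  have hBP := card_before_le_card_pairs π x (by norm_num : 2 ≤ 3)
  have hTB := card_triples_le π x 3
  rw [hsum]
  refine weighted_pairs_triples_pos hnR hα (by exact_mod_cast hB.trans hBP)
    (Nat.cast_nonneg _) ?_
  calc (T.card : ℝ) ≤ ((univ.filter (Before π · x)).card * (Fintype.card C - 2) : ℕ) := by
        exact_mod_cast hTB
    _ ≤ P.card * ((Fintype.card C : ℝ) - 2) := by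
        rw [Nat.cast_mul, Nat.cast_sub hn, Nat.cast_two]
        gcongr

theorem kDistV_moveTop_lt {V : Multiset (Ranking C)} (hV : V ≠ 0) {π : Ranking C} {x y : C}
    (hy : Before π y x) {α : ℝ}
    (hα : (3 * (Fintype.card C : ℝ) - 5) / (4 * (Fintype.card C : ℝ) - 6) < α)
    (hxα : ∀ z : C, z ≠ x → AtLeastRatio V α x z) :
    kDistV 3 (moveTop π x) V < kDistV 3 π V := by
  refine kDistV_lt_kDistV_of_sum_lt (nonTopSets π x 3) (fun S hS => (mem_nonTopSets.mp hS).1)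
    (fun S hSk hS => ?_) ?_
  · by_cases hx : x ∈ S
    · have htop : topS π S = x := by
        by_contra h
        exact hS (mem_nonTopSets.mpr ⟨hSk, hx, h⟩)
      rw [htop, topS_moveTop_of_mem π hx]
    · exact (topS_moveTop_of_notMem π hx).symm
  have hm : (0 : ℝ) < Multiset.card V := by exact_mod_cast Multiset.card_pos.mpr hV
  -- On each changed set, `moveTop π x` loses the votes not topped by `x`, and `π` loses at least
  -- the votes topped by `x`.
  have hstep : ∀ S ∈ nonTopSets π x 3,
      (disagreements (moveTop π x) V S : ℝ) - disagreements π V S ≤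
        -(Multiset.card V * (1 - 2 * ((S.card : ℝ) - 1) * (1 - α))) := by
    intro S hS
    obtain ⟨-, hx, hne⟩ := mem_nonTopSets.mp hS
    have hmove : (disagreements (moveTop π x) V S : ℝ) + topVotes V S x = Multiset.card V := by
      exact_mod_cast disagreements_add_topVotes (topS_moveTop_of_mem π hx) V
    have hπ : (topVotes V S x : ℝ) ≤ disagreements π V S := by
      exact_mod_cast topVotes_le_disagreements hne V
    have htop := topVotes_ge hx fun z _ hzx => hxα z hzx
    linarith
  have hsum := sum_le_sum hstep
  rw [sum_sub_distrib, sum_neg_distrib, ← mul_sum] at hsum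
  have hgain := mul_pos hm (sum_nonTopSets_weight_pos hy hα)
  have hlt : ∑ S ∈ nonTopSets π x 3, (disagreements (moveTop π x) V S : ℝ) <
      ∑ S ∈ nonTopSets π x 3, (disagreements π V S : ℝ) := by
    linarith
  exact_mod_cast hlt

theorem rankedFirst_of_isKMedian_three {V : Multiset (Ranking C)} (hV : V ≠ 0) {x : C} {α : ℝ}
    (hα : (3 * (Fintype.card C : ℝ) - 5) / (4 * (Fintype.card C : ℝ) - 6) < α)
    (hxα : ∀ y : C, y ≠ x → AtLeastRatio V α x y) {π : Ranking C} (hπ : IsKMedian 3 V π) :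
    RankedFirst π x := by
  intro y hyx
  by_contra hxy
  have hy : Before π y x := (lt_or_gt_of_ne (π.injective.ne hyx)).resolve_right hxy
  exact (hπ (moveTop π x)).not_gt (kDistV_moveTop_lt hV hy hα hxα)

end Median

theorem stmt4_general {C : Type*} [Fintype C] [DecidableEq C]
    (V : Multiset (Ranking C)) (hV : V ≠ 0) (x : C) :
    (∀ α : ℝ,
      (3 * (Fintype.card C : ℝ) - 5) / (4 * (Fintype.card C : ℝ) - 6) < α →
      (∀ y : C, y ≠ x → AtLeastRatio V α x y) →
      ∀ π : Ranking C, IsKMedian 3 V π → RankedFirst π x) ∧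
    ((∀ y : C, y ≠ x → AtLeastRatio V (3 / 4) x y) →
      ∀ π : Ranking C, IsKMedian 3 V π → RankedFirst π x) := by
  refine ⟨fun α hα hxα π hπ => rankedFirst_of_isKMedian_three hV hα hxα hπ,
    fun hxα π hπ y hyx => ?_⟩
  have hn : (2 : ℝ) ≤ Fintype.card C := by
    exact_mod_cast one_lt_card.mpr ⟨y, mem_univ _, x, mem_univ _, hyx⟩
  have hα : (3 * (Fintype.card C : ℝ) - 5) / (4 * (Fintype.card C : ℝ) - 6) < 3 / 4 := by
    rw [div_lt_iff₀ (by linarith)]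
    linarith
  exact rankedFirst_of_isKMedian_three hV hα hxα hπ y hyx

/-- if `x ≥_α y` for every `y ≠ x` with `α > (3n-5)/(4n-6)`, then `x` is
ranked first in every 3-wise median; in particular this holds when `x ≥_{3/4} y` for
every `y ≠ x`. -/
theorem stmt4 {C : Type*} [Fintype C] [DecidableEq C]
    (hn : 2 ≤ Fintype.card C)
    (V : Multiset (Ranking C)) (hV : V ≠ 0) (x : C) :
    (∀ α : ℝ,
      (3 * (Fintype.card C : ℝ) - 5) / (4 * (Fintype.card C : ℝ) - 6) < α →
      (∀ y : C, y ≠ x → AtLeastRatio V α x y) →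
      ∀ π : Ranking C, IsKMedian 3 V π → RankedFirst π x) ∧
    ((∀ y : C, y ≠ x → AtLeastRatio V (3 / 4) x y) →
      ∀ π : Ranking C, IsKMedian 3 V π → RankedFirst π x) :=
  stmt4_general V hV x
end

section
/- Let k ≥ 2 be an integer and let x be a candidate in an election such that x is ranked first in more than 50% of the votes. Then x is ranked first in every k-wise median of the election. -/
open Finset

/-!
If `x` is not on top of `π`, lift it to the top while keeping the other candidates in their
relative order. Subsets `S` not containing `x`, or whose `π`-top is already `x`, see no change.
On a subset `S ∋ x` whose `π`-top is another candidate, the new ranking disagrees only with the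
votes that do not put `x` on top of `S`, fewer than half of them, whereas `π` disagrees with every
vote ranking `x` first, more than half. The pair `{x, y}` with `y` above `x` in `π` is such a
subset (this is where `k ≥ 2` enters), so the `k`-wise distance strictly drops.
-/

lemma Finset.min_eq_coe_iff {α : Type*} [LinearOrder α] {s : Finset α} {a : α} :
    s.min = a ↔ a ∈ s ∧ ∀ b ∈ s, a ≤ b := by
  refine ⟨fun h => ⟨mem_of_min h, fun b hb => WithTop.coe_le_coe.1 (h ▸ min_le hb)⟩, ?_⟩
  rintro ⟨ha, hmin⟩
  exact le_antisymm (min_le ha) (Finset.le_min fun b hb => WithTop.coe_le_coe.2 (hmin b hb))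

lemma Multiset.sum_map_ite_eq_card_filter {α : Type*} (s : Multiset α) (p : α → Prop)
    [DecidablePred p] : (s.map fun a => if p a then 1 else 0).sum = card (s.filter p) := by
  rw [← countP_eq_card_filter]
  induction s using Multiset.induction_on with
  | empty => simp
  | cons a s ih => simp [countP_cons, ih, add_comm]

namespace Fin

lemma coe_cycleRange_of_ne {n : ℕ} {i j : Fin n} (h : i ≠ j) :
    (cycleRange j i : ℕ) = if i < j then (i : ℕ) + 1 else i := by
  split_ifs with hij
  · exact coe_cycleRange_of_lt hij
  · rw [cycleRange_of_gt (lt_of_le_of_ne (not_lt.mp hij) h.symm)]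

lemma cycleRange_lt_cycleRange_iff {n : ℕ} {p i j : Fin n} (hi : i ≠ p) (hj : j ≠ p) :
    cycleRange p i < cycleRange p j ↔ i < j := by
  have hi' : (i : ℕ) ≠ p := val_ne_of_ne hi
  have hj' : (j : ℕ) ≠ p := val_ne_of_ne hj
  simp only [lt_def, coe_cycleRange_of_ne hi, coe_cycleRange_of_ne hj]
  split_ifs <;> omega

end Fin

section

variable {C : Type*} [Fintype C]

lemma topS_eq_coe_iff {τ : Ranking C} {S : Finset C} {c : C} :
    topS τ S = c ↔ c ∈ S ∧ ∀ y ∈ S, τ c ≤ τ y := by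
  have hc : (c : WithTop C) = WithTop.map τ.symm (τ c : WithTop (Fin (Fintype.card C))) := by
    simp
  rw [hc, topS]
  refine ((Option.map_injective τ.symm.injective).eq_iff.trans Finset.min_eq_coe_iff).trans ?_
  simp

lemma topS_eq_of_rankedFirst {σ : Ranking C} {x : C} (h : RankedFirst σ x) {S : Finset C}
    (hx : x ∈ S) : topS σ S = x :=
  topS_eq_coe_iff.2 ⟨hx, fun y _ => (eq_or_ne y x).elim (fun h => h ▸ le_rfl) fun hy => (h y hy).le⟩

lemma topS_eq_topS_of_forall_lt_iff {π τ : Ranking C} {S : Finset C}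
    (h : ∀ a ∈ S, ∀ b ∈ S, π a < π b ↔ τ a < τ b) : topS π S = topS τ S := by
  rcases S.eq_empty_or_nonempty with rfl | hS
  · simp [topS]
  obtain ⟨c, hc, hmin⟩ := S.exists_min_image π hS
  rw [topS_eq_coe_iff.2 ⟨hc, hmin⟩, eq_comm, topS_eq_coe_iff]
  exact ⟨hc, fun y hy => not_lt.1 fun hlt => (not_lt.2 (hmin y hy)) ((h y hy c hc).2 hlt)⟩

/-- `π` with `x` lifted to the top and all other candidates kept in their relative order. -/
def moveToTop (π : Ranking C) (x : C) : Ranking C :=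
  π.trans (Fin.cycleRange (π x))

lemma rankedFirst_moveToTop (π : Ranking C) (x : C) : RankedFirst (moveToTop π x) x := by
  intro y hy
  have hyx : (π y : ℕ) ≠ π x := Fin.val_ne_of_ne (π.injective.ne hy)
  simp only [Before, Fin.lt_def, moveToTop, Equiv.trans_apply,
    Fin.coe_cycleRange_of_ne (π.injective.ne hy), Fin.coe_cycleRange_of_le le_rfl, if_true]
  split_ifs <;> omega

lemma moveToTop_lt_moveToTop_iff {π : Ranking C} {x a b : C} (ha : a ≠ x) (hb : b ≠ x) :
    moveToTop π x a < moveToTop π x b ↔ π a < π b :=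
  Fin.cycleRange_lt_cycleRange_iff (π.injective.ne ha) (π.injective.ne hb)

lemma topS_moveToTop_of_notMem {π : Ranking C} {x : C} {S : Finset C} (hx : x ∉ S) :
    topS (moveToTop π x) S = topS π S :=
  topS_eq_topS_of_forall_lt_iff fun _ ha _ hb =>
    moveToTop_lt_moveToTop_iff (ne_of_mem_of_not_mem ha hx) (ne_of_mem_of_not_mem hb hx)

variable [DecidableEq C]

def topDisagreements (V : Multiset (Ranking C)) (τ : Ranking C) (S : Finset C) : ℕ :=
  Multiset.card (V.filter fun σ => topS τ S ≠ topS σ S)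

lemma kDistV_eq_sum_topDisagreements (k : ℕ) (τ : Ranking C) (V : Multiset (Ranking C)) :
    kDistV k τ V = ∑ S ∈ univ.powerset.filter (·.card ≤ k), topDisagreements V τ S := by
  have hkDist (σ : Ranking C) : kDist k τ σ =
      ∑ S ∈ univ.powerset.filter (·.card ≤ k), if topS τ S ≠ topS σ S then 1 else 0 := by
    rw [kDist, ← filter_filter, card_filter]
  simp only [kDistV, hkDist, Multiset.sum_map_sum, Multiset.sum_map_ite_eq_card_filter,
    topDisagreements]

lemma topDisagreements_lt {V : Multiset (Ranking C)} {x : C}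
    (hmaj : Multiset.card V < 2 * Multiset.card (V.filter fun v => RankedFirst v x))
    {S : Finset C} (hxS : x ∈ S) {τ π : Ranking C} (hτ : topS τ S = x) (hπ : topS π S ≠ x) :
    topDisagreements V τ S < topDisagreements V π S := by
  have hfirst : Multiset.card (V.filter fun v => RankedFirst v x) ≤
      Multiset.card (V.filter fun σ => topS σ S = x) :=
    Multiset.card_le_card <| V.monotone_filter_right fun σ hσ => topS_eq_of_rankedFirst hσ hxS
  have hπ_ge : Multiset.card (V.filter fun σ => topS σ S = x) ≤ topDisagreements V π S :=
    Multiset.card_le_card <| V.monotone_filter_right fun σ hσ => hσ ▸ hπ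
  have hτ_eq : topDisagreements V τ S = Multiset.card (V.filter fun σ => ¬ topS σ S = x) := by
    simp only [topDisagreements, hτ, ne_comm]
  have hsplit := V.card_eq_countP_add_countP (fun σ => topS σ S = x)
  simp only [Multiset.countP_eq_card_filter] at hsplit
  omega

lemma topDisagreements_moveToTop_le {V : Multiset (Ranking C)} {x : C}
    (hmaj : Multiset.card V < 2 * Multiset.card (V.filter fun v => RankedFirst v x))
    (π : Ranking C) (S : Finset C) :
    topDisagreements V (moveToTop π x) S ≤ topDisagreements V π S := by
  by_cases hxS : x ∈ S
  · have htop := topS_eq_of_rankedFirst (rankedFirst_moveToTop π x) hxS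
    by_cases hπ : topS π S = x
    · rw [topDisagreements, topDisagreements, htop, hπ]
    · exact (topDisagreements_lt hmaj hxS htop hπ).le
  · rw [topDisagreements, topS_moveToTop_of_notMem hxS, topDisagreements]

lemma kDistV_moveToTop_lt {k : ℕ} (hk : 2 ≤ k) {V : Multiset (Ranking C)} {x : C}
    (hmaj : Multiset.card V < 2 * Multiset.card (V.filter fun v => RankedFirst v x))
    {π : Ranking C} (hπ : ¬ RankedFirst π x) :
    kDistV k (moveToTop π x) V < kDistV k π V := by
  obtain ⟨y, hyx, hy⟩ : ∃ y, y ≠ x ∧ π y < π x := by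
    simp only [RankedFirst, Before, not_forall, not_lt] at hπ
    obtain ⟨y, hyx, hle⟩ := hπ
    exact ⟨y, hyx, lt_of_le_of_ne hle (π.injective.ne hyx)⟩
  have hxy : x ∈ ({x, y} : Finset C) := mem_insert_self x {y}
  rw [kDistV_eq_sum_topDisagreements, kDistV_eq_sum_topDisagreements]
  refine sum_lt_sum (fun S _ => topDisagreements_moveToTop_le hmaj π S) ⟨{x, y}, ?_, ?_⟩
  · simp [card_pair hyx.symm, hk]
  · refine topDisagreements_lt hmaj hxy
      (topS_eq_of_rankedFirst (rankedFirst_moveToTop π x) hxy) fun h => ?_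
    exact (topS_eq_coe_iff.1 h).2 y (by simp) |>.not_gt hy

end

theorem stmt5_general {C : Type*} [Fintype C] [DecidableEq C]
    (k : ℕ) (hk : 2 ≤ k)
    (V : Multiset (Ranking C)) (x : C)
    (hx : Multiset.card V < 2 * Multiset.card (V.filter (fun v => RankedFirst v x))) :
    ∀ π : Ranking C, IsKMedian k V π → RankedFirst π x := fun π hmed =>
  by_contra fun hπ => (hmed (moveToTop π x)).not_gt (kDistV_moveToTop_lt hk hx hπ)

/-- a candidate ranked first in more than 50% of the votes is ranked
first in every `k`-wise median (`k ≥ 2`). -/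
theorem stmt5 {C : Type*} [Fintype C] [DecidableEq C]
    (k : ℕ) (hk : 2 ≤ k)
    (V : Multiset (Ranking C)) (hV : V ≠ 0) (x : C)
    (hx : Multiset.card V < 2 * Multiset.card (V.filter (fun v => RankedFirst v x))) :
    ∀ π : Ranking C, IsKMedian k V π → RankedFirst π x :=
  stmt5_general k hk V x hx
end

section
/- Let k ≥ 2 be an integer and let π be a ranking that occurs as a vote in more than 50% of the total votes of an election. Then π is the unique k-wise median of the election. -/
open Finset

/-! A strict majority element minimizes the total distance to a profile under any `ℕ`-valued
metric `d`: replacing it by `b` raises the distance to each of its copies by `d a b`, while by the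
triangle inequality every other vote gets closer by at most `d a b`. The `k`-wise Kendall-tau
distance is such a metric, and for `k ≥ 2` it separates two distinct rankings through a pair of
candidates on which they disagree. -/

theorem Multiset.sum_map_lt_sum_map_of_card_lt_two_mul_count {α : Type*} [DecidableEq α]
    (d : α → α → ℕ) (d_self : ∀ x, d x x = 0) (d_comm : ∀ x y, d x y = d y x)
    (d_triangle : ∀ x y z, d x z ≤ d x y + d y z) {V : Multiset α} {a b : α}
    (hV : Multiset.card V < 2 * V.count a) (hab : 0 < d a b) :
    (V.map (d a)).sum < (V.map (d b)).sum := by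
  obtain ⟨W, hVW⟩ : ∃ W, V = Multiset.replicate (V.count a) a + W :=
    Multiset.le_iff_exists_add.mp (Multiset.le_count_iff_replicate_le.mp le_rfl)
  generalize V.count a = m at hV hVW
  subst hVW
  have hW : Multiset.card W < m := by
    simp only [Multiset.card_add, Multiset.card_replicate] at hV
    omega
  calc ((Multiset.replicate m a + W).map (d a)).sum
      = (W.map (d a)).sum := by simp [d_self]
    _ ≤ (W.map fun c => d a b + d b c).sum :=
        Multiset.sum_map_le_sum_map _ _ fun c _ => d_triangle a b c
    _ = Multiset.card W * d a b + (W.map (d b)).sum := by simp [Multiset.sum_map_add]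
    _ < m * d a b + (W.map (d b)).sum := by gcongr
    _ = ((Multiset.replicate m a + W).map (d b)).sum := by simp [d_comm b a]

theorem Ranking.exists_inversion {C : Type*} [Fintype C] {π τ : Ranking C} (h : π ≠ τ) :
    ∃ x y, π x < π y ∧ τ y < τ x := by
  by_contra! hinv
  refine h (Equiv.ext fun x => ?_)
  have hmono : StrictMono (τ ∘ π.symm) := fun i j hij => by
    refine (hinv _ _ (by simpa using hij)).lt_of_ne ?_
    simpa using hij.ne
  simpa using (hmono.apply_eq (x := π x)).symm

section KendallTau

variable {C : Type*} [Fintype C] [DecidableEq C]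

theorem topS_pair {π : Ranking C} {x y : C} (h : π x < π y) : topS π {x, y} = x := by
  simp [topS, h.le]

theorem kDist_self (k : ℕ) (π : Ranking C) : kDist k π π = 0 := by
  simp [kDist]

theorem kDist_comm (k : ℕ) (π σ : Ranking C) : kDist k π σ = kDist k σ π := by
  simp only [kDist, ne_comm]

theorem kDist_triangle (k : ℕ) (π τ σ : Ranking C) :
    kDist k π σ ≤ kDist k π τ + kDist k τ σ := by
  unfold kDist
  refine (Finset.card_le_card fun S hS => ?_).trans (Finset.card_union_le _ _)
  simp only [Finset.mem_union, Finset.mem_filter] at hS ⊢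
  by_cases h : topS π S = topS τ S
  · exact Or.inr ⟨hS.1, hS.2.1, h ▸ hS.2.2⟩
  · exact Or.inl ⟨hS.1, hS.2.1, h⟩

theorem kDist_pos {k : ℕ} (hk : 2 ≤ k) {π τ : Ranking C} (h : π ≠ τ) :
    0 < kDist k π τ := by
  obtain ⟨x, y, hπ, hτ⟩ := Ranking.exists_inversion h
  have hxy : x ≠ y := fun e => by simp [e] at hπ
  have hτ' : topS τ {x, y} = y := by rw [Finset.pair_comm]; exact topS_pair hτ
  refine Finset.card_pos.mpr ⟨{x, y}, ?_⟩
  simp only [Finset.mem_filter, Finset.mem_powerset, Finset.subset_univ, true_and,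
    Finset.card_pair hxy, topS_pair hπ, hτ']
  exact ⟨hk, by exact_mod_cast hxy⟩

theorem kDistV_lt_of_card_lt_two_mul_count {k : ℕ} (hk : 2 ≤ k) {V : Multiset (Ranking C)}
    {π τ : Ranking C} (hπ : Multiset.card V < 2 * V.count π) (hτ : τ ≠ π) :
    kDistV k π V < kDistV k τ V :=
  Multiset.sum_map_lt_sum_map_of_card_lt_two_mul_count (kDist k) (kDist_self k)
    (kDist_comm k) (kDist_triangle k) hπ (kDist_pos hk hτ.symm)

end KendallTau

theorem stmt6_general {C : Type*} [Fintype C] [DecidableEq C]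
    (k : ℕ) (hk : 2 ≤ k)
    (V : Multiset (Ranking C)) (π : Ranking C)
    (hπ : Multiset.card V < 2 * V.count π) :
    IsKMedian k V π ∧ ∀ σ : Ranking C, IsKMedian k V σ → σ = π := by
  refine ⟨fun σ => ?_, fun σ hσ => ?_⟩
  · rcases eq_or_ne σ π with rfl | hσ
    · exact le_rfl
    · exact (kDistV_lt_of_card_lt_two_mul_count hk hπ hσ).le
  · by_contra hne
    exact (hσ π).not_gt (kDistV_lt_of_card_lt_two_mul_count hk hπ hne)

/-- a ranking occurring in more than 50% of the votes is the unique
`k`-wise median (`k ≥ 2`). -/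
theorem stmt6 {C : Type*} [Fintype C] [DecidableEq C]
    (k : ℕ) (hk : 2 ≤ k)
    (V : Multiset (Ranking C)) (hV : V ≠ 0) (π : Ranking C)
    (hπ : Multiset.card V < 2 * V.count π) :
    IsKMedian k V π ∧ ∀ σ : Ranking C, IsKMedian k V σ → σ = π :=
  stmt6_general k hk V π hπ
end

section
/- There exists an election (one with 4 candidates and 11 votes) and a candidate z such that z is a Condorcet loser — i.e., every other candidate is ranked before z in more than half of the votes — yet z is ranked first in the unique 3-wise median of the election. Hence the 3-wise Kemeny voting scheme does not satisfy the Condorcet loser criterion. -/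
open Finset

/-!
Candidate `3` heads five of the eleven votes and is last in the other six, so every other
candidate beats it `6 : 5` head to head. The 3-wise distance, however, also scores the top of
each triple, and there `3` profits from the six remaining votes being split between `0`, `1`
and `2`: the ranking `3 ≻ 0 ≻ 2 ≻ 1` is at distance `53` from the profile, and every other
ranking of the four candidates is strictly farther. Both the pairwise counts and the
distances of all `24` rankings are checked by direct computation.
-/

/-- The ranking listing the candidates of `l` from top to bottom. -/
def Ranking.ofList {C : Type*} [Fintype C] [DecidableEq C] (l : List C)
    (hnd : l.Nodup := by decide) (hmem : ∀ x, x ∈ l := by decide) : Ranking C :=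
  let e := hnd.getEquivOfForallMemList l hmem
  e.symm.trans (finCongr (by simpa using Fintype.card_congr e))

theorem isKMedian_iff_eq_of_forall_lt {C : Type*} [Fintype C] [DecidableEq C] {k : ℕ}
    {V : Multiset (Ranking C)} {π : Ranking C}
    (h : ∀ σ, σ ≠ π → kDistV k π V < kDistV k σ V) (σ : Ranking C) :
    IsKMedian k V σ ↔ σ = π := by
  constructor
  · intro hσ
    by_contra hne
    exact absurd (hσ π) (h σ hne).not_ge
  · rintro rfl τ
    by_cases hτ : τ = σ
    · rw [hτ]
    · exact (h τ hτ).le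

namespace CondorcetLoserExample

def profile : Multiset (Ranking (Fin 4)) :=
  {.ofList [0, 1, 2, 3], .ofList [0, 2, 1, 3], .ofList [0, 2, 1, 3], .ofList [1, 0, 2, 3],
   .ofList [1, 2, 0, 3], .ofList [2, 1, 0, 3], .ofList [3, 0, 2, 1], .ofList [3, 0, 2, 1],
   .ofList [3, 0, 2, 1], .ofList [3, 2, 1, 0], .ofList [3, 2, 1, 0]}

def median : Ranking (Fin 4) := .ofList [3, 0, 2, 1]

theorem card_profile : Multiset.card profile = 11 := rfl

theorem votesBefore_profile_three (y : Fin 4) (hy : y ≠ 3) : votesBefore profile y 3 = 6 := by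
  revert y
  decide

theorem kDistV_median : kDistV 3 median profile = 53 := by decide

theorem lt_kDistV_of_ne_median (σ : Ranking (Fin 4)) (hσ : σ ≠ median) :
    53 < kDistV 3 σ profile := by
  revert σ
  decide

theorem card_lt_two_mul_votesBefore_three (y : Fin 4) (hy : y ≠ 3) :
    Multiset.card profile < 2 * votesBefore profile y 3 := by
  rw [card_profile, votesBefore_profile_three y hy]
  norm_num

theorem isKMedian_profile_iff (σ : Ranking (Fin 4)) : IsKMedian 3 profile σ ↔ σ = median :=
  isKMedian_iff_eq_of_forall_lt (fun τ hτ => kDistV_median ▸ lt_kDistV_of_ne_median τ hτ) σ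

theorem rankedFirst_median : RankedFirst median 3 := by decide

end CondorcetLoserExample

/-- there is an election with 4 candidates and 11 votes with a Condorcet
loser `z` that is nevertheless ranked first in the unique 3-wise median; hence the
3-wise Kemeny scheme fails the Condorcet loser criterion. -/
theorem stmt7 :
    ∃ (V : Multiset (Ranking (Fin 4))) (z : Fin 4),
      Multiset.card V = 11 ∧
      (∀ y : Fin 4, y ≠ z → Multiset.card V < 2 * votesBefore V y z) ∧
      ∃ π : Ranking (Fin 4), IsKMedian 3 V π ∧
        (∀ σ : Ranking (Fin 4), IsKMedian 3 V σ → σ = π) ∧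
        RankedFirst π z := by
  open CondorcetLoserExample in
  exact ⟨profile, 3, card_profile, card_lt_two_mul_votesBefore_three, median,
    (isKMedian_profile_iff median).2 rfl, fun σ => (isKMedian_profile_iff σ).1, rankedFirst_median⟩
end

section
/- Let x, y be candidates in an election with n ≥ 2 candidates. Suppose x ≥_α y for some α ∈ [0,1] with α > 1 − 1/(n² − 3n + 4). Then x is ranked before y in every 3-wise median of the election. -/
open Finset

section AuxTop
variable {C : Type*} [Fintype C] [DecidableEq C]

lemma topS_empty (ρ : Ranking C) : topS ρ ∅ = ⊤ := by simp [topS]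

lemma topS_min (ρ : Ranking C) {S : Finset C} {a : C} (ha : a ∈ S)
    (hmin : ∀ b ∈ S, ρ a ≤ ρ b) : topS ρ S = (a : WithTop C) := by
  have h1 : (S.image ρ).min = ((ρ a : Fin (Fintype.card C)) : WithTop (Fin (Fintype.card C))) := by
    apply le_antisymm
    · exact Finset.min_le (Finset.mem_image_of_mem ρ ha)
    · apply Finset.le_min
      intro b hb
      obtain ⟨c, hc, rfl⟩ := Finset.mem_image.1 hb
      exact_mod_cast hmin c hc
  unfold topS
  rw [h1, WithTop.map_coe]
  simp

lemma topS_singleton (ρ : Ranking C) (a : C) : topS ρ {a} = (a : WithTop C) :=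
  topS_min ρ (Finset.mem_singleton_self a) (by intro b hb; rw [Finset.mem_singleton.1 hb])

lemma topS_congr (ρ ρ' : Ranking C) (S : Finset C)
    (h : ∀ a ∈ S, ∀ b ∈ S, ρ a ≤ ρ b → ρ' a ≤ ρ' b) : topS ρ' S = topS ρ S := by
  rcases S.eq_empty_or_nonempty with rfl | hS
  · rw [topS_empty, topS_empty]
  · obtain ⟨a, ha, hmin⟩ := S.exists_min_image ρ hS
    rw [topS_min ρ ha hmin, topS_min ρ' ha (fun b hb => h a ha b hb (hmin b hb))]

end AuxTop

/-- the cycle permutation on positions: `q ↦ p`, `j ↦ j+1` for `p ≤ j < q`. -/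
def cycF {N : ℕ} (p q : Fin N) (j : Fin N) : Fin N :=
  if j = q then p else if h : p.val ≤ j.val ∧ j.val < q.val then ⟨j.val + 1, by have := q.isLt; omega⟩ else j

def cycG {N : ℕ} (p q : Fin N) (j : Fin N) : Fin N :=
  if j = p then q else if h : p.val < j.val ∧ j.val ≤ q.val then ⟨j.val - 1, by have := j.isLt; omega⟩ else j

section cycLemmas
variable {N : ℕ} (p q : Fin N)

lemma cycF_eq_q : cycF p q q = p := by simp [cycF]

lemma cycF_lo {j : Fin N} (hpq : p.val < q.val) (h : j.val < p.val) : cycF p q j = j := by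
  unfold cycF
  rw [if_neg (by intro e; subst e; omega), dif_neg (by omega)]

lemma cycF_mid {j : Fin N} (h1 : p.val ≤ j.val) (h2 : j.val < q.val) :
    (cycF p q j).val = j.val + 1 := by
  unfold cycF
  rw [if_neg (by intro e; subst e; omega), dif_pos ⟨h1, h2⟩]

lemma cycF_hi {j : Fin N} (h : q.val < j.val) : cycF p q j = j := by
  unfold cycF
  rw [if_neg (by intro e; subst e; omega), dif_neg (by omega)]

lemma cycG_eq_p : cycG p q p = q := by simp [cycG]

lemma cycG_lo {j : Fin N} (hpq : p.val < q.val) (h : j.val < p.val) : cycG p q j = j := by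
  unfold cycG
  rw [if_neg (by intro e; subst e; omega), dif_neg (by omega)]

lemma cycG_mid {j : Fin N} (hpq : p.val < q.val) (h1 : p.val < j.val) (h2 : j.val ≤ q.val) :
    (cycG p q j).val = j.val - 1 := by
  unfold cycG
  rw [if_neg (by intro e; subst e; omega), dif_pos ⟨h1, h2⟩]

lemma cycG_hi {j : Fin N} (hpq : p.val < q.val) (h : q.val < j.val) : cycG p q j = j := by
  unfold cycG
  rw [if_neg (by intro e; subst e; omega), dif_neg (by omega)]

end cycLemmas

def cyc {N : ℕ} (p q : Fin N) (hpq : p.val < q.val) : Fin N ≃ Fin N where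
  toFun := cycF p q
  invFun := cycG p q
  left_inv := by
    intro j
    rcases eq_or_ne j q with rfl | hq
    · rw [cycF_eq_q, cycG_eq_p]
    · have hjq : j.val ≠ q.val := fun e => hq (Fin.ext e)
      by_cases h2 : p.val ≤ j.val ∧ j.val < q.val
      · have hv := cycF_mid p q h2.1 h2.2
        have hg := cycG_mid p q hpq (j := cycF p q j) (by omega) (by omega)
        apply Fin.ext; omega
      · rcases (by omega : j.val < p.val ∨ q.val < j.val) with h | h
        · rw [cycF_lo p q hpq h, cycG_lo p q hpq h]
        · rw [cycF_hi p q h, cycG_hi p q hpq h]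
  right_inv := by
    intro j
    rcases eq_or_ne j p with rfl | hp
    · rw [cycG_eq_p, cycF_eq_q]
    · have hjp : j.val ≠ p.val := fun e => hp (Fin.ext e)
      by_cases h2 : p.val < j.val ∧ j.val ≤ q.val
      · have hv := cycG_mid p q hpq h2.1 h2.2
        have hg := cycF_mid p q (j := cycG p q j) (by omega) (by omega)
        apply Fin.ext; omega
      · rcases (by omega : j.val < p.val ∨ q.val < j.val) with h | h
        · rw [cycG_lo p q hpq h, cycF_lo p q hpq h]
        · rw [cycG_hi p q hpq h, cycF_hi p q h]

@[simp] lemma cyc_apply {N : ℕ} (p q : Fin N) (hpq : p.val < q.val) (j : Fin N) :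
    cyc p q hpq j = cycF p q j := rfl

@[simp] lemma cyc_symm_apply {N : ℕ} (p q : Fin N) (hpq : p.val < q.val) (j : Fin N) :
    (cyc p q hpq).symm j = cycG p q j := rfl

section Moves
variable {C : Type*} [Fintype C] [DecidableEq C]

/-- `x` moved to just before `y`. -/
def PA (π : Ranking C) (x y : C) (hpq : (π y).val < (π x).val) : Ranking C :=
  π.trans (cyc (π y) (π x) hpq)

/-- `y` moved to just after `x`. -/
def PB (π : Ranking C) (x y : C) (hpq : (π y).val < (π x).val) : Ranking C :=
  π.trans (cyc (π y) (π x) hpq).symm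

variable (π : Ranking C) (x y : C) (hpq : (π y).val < (π x).val)

lemma PA_x : PA π x y hpq x = π y := by
  simp [PA, Equiv.trans_apply, cycF_eq_q]

lemma PA_y : (PA π x y hpq y).val = (π y).val + 1 := by
  simp only [PA, Equiv.trans_apply, cyc_apply]
  exact cycF_mid _ _ le_rfl hpq

lemma PB_y : PB π x y hpq y = π x := by
  simp [PB, Equiv.trans_apply, cycG_eq_p]

lemma PB_x : (PB π x y hpq x).val = (π x).val - 1 := by
  simp only [PB, Equiv.trans_apply, cyc_symm_apply]
  exact cycG_mid _ _ hpq hpq le_rfl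

/-- case description of the values of `PA` on elements other than `x`. -/
lemma PA_cases (z : C) (hz : z ≠ x) :
    ((PA π x y hpq z).val = (π z).val ∧ ((π z).val < (π y).val ∨ (π x).val < (π z).val)) ∨
    ((PA π x y hpq z).val = (π z).val + 1 ∧ (π y).val ≤ (π z).val ∧ (π z).val < (π x).val) := by
  have hne : (π z).val ≠ (π x).val := fun e => hz (π.injective (Fin.ext e))
  by_cases h2 : (π y).val ≤ (π z).val ∧ (π z).val < (π x).val
  · right
    refine ⟨?_, h2.1, h2.2⟩
    simp only [PA, Equiv.trans_apply, cyc_apply]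
    exact cycF_mid _ _ h2.1 h2.2
  · left
    rcases (by omega : (π z).val < (π y).val ∨ (π x).val < (π z).val) with h | h
    · refine ⟨?_, Or.inl h⟩
      simp only [PA, Equiv.trans_apply, cyc_apply, cycF_lo _ _ hpq h]
    · refine ⟨?_, Or.inr h⟩
      simp only [PA, Equiv.trans_apply, cyc_apply, cycF_hi _ _ h]

lemma PB_cases (z : C) (hz : z ≠ y) :
    ((PB π x y hpq z).val = (π z).val ∧ ((π z).val < (π y).val ∨ (π x).val < (π z).val)) ∨
    ((PB π x y hpq z).val = (π z).val - 1 ∧ (π y).val < (π z).val ∧ (π z).val ≤ (π x).val) := by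
  have hne : (π z).val ≠ (π y).val := fun e => hz (π.injective (Fin.ext e))
  by_cases h2 : (π y).val < (π z).val ∧ (π z).val ≤ (π x).val
  · right
    refine ⟨?_, h2.1, h2.2⟩
    simp only [PB, Equiv.trans_apply, cyc_symm_apply]
    exact cycG_mid _ _ hpq h2.1 h2.2
  · left
    rcases (by omega : (π z).val < (π y).val ∨ (π x).val < (π z).val) with h | h
    · refine ⟨?_, Or.inl h⟩
      simp only [PB, Equiv.trans_apply, cyc_symm_apply, cycG_lo _ _ hpq h]
    · refine ⟨?_, Or.inr h⟩
      simp only [PB, Equiv.trans_apply, cyc_symm_apply, cycG_hi _ _ hpq h]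

lemma PA_le {z w : C} (hz : z ≠ x) (hw : w ≠ x) (h : π z ≤ π w) :
    PA π x y hpq z ≤ PA π x y hpq w := by
  have hzw : (π z).val ≤ (π w).val := h
  have h1 := PA_cases π x y hpq z hz
  have h2 := PA_cases π x y hpq w hw
  have hiz : (π z).val ≠ (π x).val := fun e => hz (π.injective (Fin.ext e))
  have hiw : (π w).val ≠ (π x).val := fun e => hw (π.injective (Fin.ext e))
  show (PA π x y hpq z).val ≤ (PA π x y hpq w).val
  omega

lemma PB_le {z w : C} (hz : z ≠ y) (hw : w ≠ y) (h : π z ≤ π w) :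
    PB π x y hpq z ≤ PB π x y hpq w := by
  have hzw : (π z).val ≤ (π w).val := h
  have h1 := PB_cases π x y hpq z hz
  have h2 := PB_cases π x y hpq w hw
  have hiz : (π z).val ≠ (π y).val := fun e => hz (π.injective (Fin.ext e))
  have hiw : (π w).val ≠ (π y).val := fun e => hw (π.injective (Fin.ext e))
  show (PB π x y hpq z).val ≤ (PB π x y hpq w).val
  omega

end Moves

section KeyLemmas
variable {C : Type*} [Fintype C] [DecidableEq C]

lemma mem_swap_image (x y : C) {S : Finset C} {a : C} :
    a ∈ S.image (Equiv.swap x y) ↔ (Equiv.swap x y) a ∈ S := by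
  constructor
  · intro h
    obtain ⟨b, hb, rfl⟩ := Finset.mem_image.1 h
    rwa [Equiv.swap_apply_self]
  · intro h
    exact Finset.mem_image.2 ⟨_, h, Equiv.swap_apply_self x y a⟩

lemma swap_image_of_both {x y : C} {S : Finset C} (hx : x ∈ S) (hy : y ∈ S) :
    S.image (Equiv.swap x y) = S := by
  ext a
  rw [mem_swap_image]
  by_cases hax : a = x
  · subst hax; rw [Equiv.swap_apply_left]; exact ⟨fun _ => hx, fun _ => hy⟩
  · by_cases hay : a = y
    · subst hay; rw [Equiv.swap_apply_right]; exact ⟨fun _ => hy, fun _ => hx⟩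
    · rw [Equiv.swap_apply_of_ne_of_ne hax hay]

lemma swap_image_insert {x y : C} {T : Finset C} (hxT : x ∉ T) (hyT : y ∉ T) :
    (insert x T).image (Equiv.swap x y) = insert y T := by
  rw [Finset.image_insert, Equiv.swap_apply_left]
  congr 1
  have : T.image (Equiv.swap x y) = T.image id :=
    Finset.image_congr (fun a ha => Equiv.swap_apply_of_ne_of_ne
      (by rintro rfl; exact hxT ha) (by rintro rfl; exact hyT ha))
  rw [this, Finset.image_id]

lemma coe_ne_coe_top {a b : C} (h : a ≠ b) : (a : WithTop C) ≠ (b : WithTop C) :=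
  fun e => h (by exact_mod_cast e)

variable (π σ : Ranking C) (x y : C)

/-- Key per-set inequality for votes ranking `x` before `y`. -/
lemma key1 (hxy : x ≠ y) (hpq : (π y).val < (π x).val) (hgood : (σ x).val < (σ y).val)
    (S : Finset C) :
    ((if topS (PA π x y hpq) S ≠ topS σ S then 1 else 0) +
     (if topS (PB π x y hpq) (S.image (Equiv.swap x y)) ≠ topS σ (S.image (Equiv.swap x y)) then 1 else 0) +
     (if S = {x, y} then 2 else 0))
    ≤ (if topS π S ≠ topS σ S then 1 else 0) +
      (if topS π (S.image (Equiv.swap x y)) ≠ topS σ (S.image (Equiv.swap x y)) then 1 else 0) := by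
  classical
  have hvAx : (PA π x y hpq x).val = (π y).val := by rw [PA_x]
  have hvAy : (PA π x y hpq y).val = (π y).val + 1 := PA_y π x y hpq
  have hvBy : (PB π x y hpq y).val = (π x).val := by rw [PB_y]
  have hvBx : (PB π x y hpq x).val = (π x).val - 1 := PB_x π x y hpq
  by_cases hx : x ∈ S
  · by_cases hy : y ∈ S
    · -- both x and y in S
      have hsS : S.image (Equiv.swap x y) = S := swap_image_of_both hx hy
      by_cases hS2 : S = {x, y}
      · subst hS2
        have htπ : topS π {x, y} = (y : WithTop C) := by
          apply topS_min π (by simp)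
          intro b hb
          rcases Finset.mem_insert.1 hb with rfl | hb
          · exact le_of_lt hpq
          · rw [Finset.mem_singleton.1 hb]
        have htσ : topS σ {x, y} = (x : WithTop C) := by
          apply topS_min σ (by simp)
          intro b hb
          rcases Finset.mem_insert.1 hb with rfl | hb
          · exact le_rfl
          · rw [Finset.mem_singleton.1 hb]; exact le_of_lt hgood
        have htA : topS (PA π x y hpq) {x, y} = (x : WithTop C) := by
          apply topS_min _ (by simp)
          intro b hb
          rcases Finset.mem_insert.1 hb with rfl | hb
          · exact le_rfl
          · rw [Finset.mem_singleton.1 hb]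
            show (PA π x y hpq x).val ≤ (PA π x y hpq y).val
            omega
        have htB : topS (PB π x y hpq) {x, y} = (x : WithTop C) := by
          apply topS_min _ (by simp)
          intro b hb
          rcases Finset.mem_insert.1 hb with rfl | hb
          · exact le_rfl
          · rw [Finset.mem_singleton.1 hb]
            show (PB π x y hpq x).val ≤ (PB π x y hpq y).val
            omega
        rw [hsS, htπ, htσ, htA, htB, if_pos rfl]
        have hne : (y : WithTop C) ≠ (x : WithTop C) := coe_ne_coe_top (Ne.symm hxy)
        simp [hne]
      · -- S ⊋ {x,y}
        rw [hsS, if_neg hS2]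
        by_cases hDπ : topS π S ≠ topS σ S
        · rw [if_pos hDπ]
          split_ifs <;> omega
        · push_neg at hDπ
          obtain ⟨a, ha, hmin⟩ := S.exists_min_image π ⟨x, hx⟩
          have htπ : topS π S = (a : WithTop C) := topS_min π ha hmin
          have hax : a ≠ x := by
            rintro rfl
            have h1 : (π a).val ≤ (π y).val := hmin y hy
            omega
          have hay : a ≠ y := by
            rintro rfl
            obtain ⟨c, hc, hcmin⟩ := S.exists_min_image σ ⟨x, hx⟩
            have htσ : topS σ S = (c : WithTop C) := topS_min σ hc hcmin
            have hca' : (c : WithTop C) = (a : WithTop C) := by rw [← htσ, ← hDπ]; exact htπ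
            have hca : c = a := by exact_mod_cast hca'
            subst hca
            have h2 : (σ c).val ≤ (σ x).val := hcmin x hx
            omega
          have hap : (π a).val < (π y).val := by
            have h1 : (π a).val ≤ (π y).val := hmin y hy
            have h2 : (π a).val ≠ (π y).val := fun e => hay (π.injective (Fin.ext e))
            omega
          have htA : topS (PA π x y hpq) S = (a : WithTop C) := by
            apply topS_min _ ha
            intro b hb
            by_cases hbx : b = x
            · show (PA π x y hpq a).val ≤ (PA π x y hpq b).val
              have hAa := PA_cases π x y hpq a hax
              rw [hbx]
              omega
            · exact PA_le π x y hpq hax hbx (hmin b hb)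
          have htB : topS (PB π x y hpq) S = (a : WithTop C) := by
            apply topS_min _ ha
            intro b hb
            by_cases hby : b = y
            · show (PB π x y hpq a).val ≤ (PB π x y hpq b).val
              have hBa := PB_cases π x y hpq a hay
              rw [hby]
              omega
            · exact PB_le π x y hpq hay hby (hmin b hb)
          rw [htA, htB, ← hDπ, htπ]
          simp
    · -- x ∈ S, y ∉ S : the interesting case
      have hxT : x ∉ S.erase x := Finset.notMem_erase x S
      have hyT : y ∉ S.erase x := fun h => hy (Finset.mem_of_mem_erase h)
      have hS : S = insert x (S.erase x) := (Finset.insert_erase hx).symm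
      have hsS : S.image (Equiv.swap x y) = insert y (S.erase x) := by
        conv_lhs => rw [hS]
        exact swap_image_insert hxT hyT
      have hSne : S ≠ {x, y} := by
        intro e
        exact hy (e ▸ Finset.mem_insert_of_mem (Finset.mem_singleton_self y))
      rw [if_neg hSne, add_zero, hsS]
      rcases Finset.eq_empty_or_nonempty (S.erase x) with hTe | hTne
      · -- S = {x}
        have hSx : S = {x} := by rw [hS, hTe]; rfl
        have hys : insert y (S.erase x) = {y} := by rw [hTe]; simp
        rw [hys, hSx]
        rw [topS_singleton, topS_singleton, topS_singleton, topS_singleton]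
        simp
      · obtain ⟨t, htT, htmin⟩ := (S.erase x).exists_min_image π hTne
        have htx : t ≠ x := by rintro rfl; exact hxT htT
        have hty : t ≠ y := by rintro rfl; exact hyT htT
        have hqt : (π t).val ≠ (π x).val := fun e => htx (π.injective (Fin.ext e))
        have hpt : (π t).val ≠ (π y).val := fun e => hty (π.injective (Fin.ext e))
        have htmem : t ∈ S := Finset.mem_of_mem_erase htT
        rcases (by omega : (π t).val < (π y).val ∨ ((π y).val < (π t).val ∧ (π t).val < (π x).val) ∨ (π x).val < (π t).val) with hR | hR | hR
        · -- Region 1 : t before y ; nothing changes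
          have htπS : topS π S = (t : WithTop C) := by
            apply topS_min π htmem
            intro b hb
            by_cases hbx : b = x
            · rw [hbx]; show (π t).val ≤ (π x).val; omega
            · exact htmin b (Finset.mem_erase.2 ⟨hbx, hb⟩)
          have htAS : topS (PA π x y hpq) S = (t : WithTop C) := by
            apply topS_min _ htmem
            intro b hb
            by_cases hbx : b = x
            · rw [hbx]
              show (PA π x y hpq t).val ≤ (PA π x y hpq x).val
              have hAt := PA_cases π x y hpq t htx
              omega
            · exact PA_le π x y hpq htx hbx (htmin b (Finset.mem_erase.2 ⟨hbx, hb⟩))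
          have htπs : topS π (insert y (S.erase x)) = (t : WithTop C) := by
            apply topS_min π (Finset.mem_insert_of_mem htT)
            intro b hb
            rcases Finset.mem_insert.1 hb with hby | hbT
            · rw [hby]; show (π t).val ≤ (π y).val; omega
            · exact htmin b hbT
          have htBs : topS (PB π x y hpq) (insert y (S.erase x)) = (t : WithTop C) := by
            apply topS_min _ (Finset.mem_insert_of_mem htT)
            intro b hb
            rcases Finset.mem_insert.1 hb with hby | hbT
            · rw [hby]
              show (PB π x y hpq t).val ≤ (PB π x y hpq y).val
              have hBt := PB_cases π x y hpq t hty
              omega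
            · exact PB_le π x y hpq hty (by rintro rfl; exact hyT hbT) (htmin b hbT)
          rw [htπS, htAS, htπs, htBs]
        · -- Region 2 : t strictly between y and x
          have htπS : topS π S = (t : WithTop C) := by
            apply topS_min π htmem
            intro b hb
            by_cases hbx : b = x
            · rw [hbx]; show (π t).val ≤ (π x).val; omega
            · exact htmin b (Finset.mem_erase.2 ⟨hbx, hb⟩)
          have htAS : topS (PA π x y hpq) S = (x : WithTop C) := by
            apply topS_min _ hx
            intro b hb
            by_cases hbx : b = x
            · rw [hbx]
            · show (PA π x y hpq x).val ≤ (PA π x y hpq b).val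
              have hbt : (π t).val ≤ (π b).val := htmin b (Finset.mem_erase.2 ⟨hbx, hb⟩)
              have hAb := PA_cases π x y hpq b hbx
              omega
          have htπs : topS π (insert y (S.erase x)) = (y : WithTop C) := by
            apply topS_min π (Finset.mem_insert_self y _)
            intro b hb
            rcases Finset.mem_insert.1 hb with hby | hbT
            · rw [hby]
            · have hbt : (π t).val ≤ (π b).val := htmin b hbT
              show (π y).val ≤ (π b).val; omega
          have htBs : topS (PB π x y hpq) (insert y (S.erase x)) = (t : WithTop C) := by
            apply topS_min _ (Finset.mem_insert_of_mem htT)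
            intro b hb
            rcases Finset.mem_insert.1 hb with hby | hbT
            · rw [hby]
              show (PB π x y hpq t).val ≤ (PB π x y hpq y).val
              have hBt := PB_cases π x y hpq t hty
              omega
            · exact PB_le π x y hpq hty (by rintro rfl; exact hyT hbT) (htmin b hbT)
          obtain ⟨u, huT, humin⟩ := (S.erase x).exists_min_image σ hTne
          have hux : u ≠ x := by rintro rfl; exact hxT huT
          have huy : u ≠ y := by rintro rfl; exact hyT huT
          by_cases hxu : (σ x).val < (σ u).val
          · have hσS : topS σ S = (x : WithTop C) := by
              apply topS_min σ hx
              intro b hb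
              by_cases hbx : b = x
              · rw [hbx]
              · have hbu : (σ u).val ≤ (σ b).val := humin b (Finset.mem_erase.2 ⟨hbx, hb⟩)
                show (σ x).val ≤ (σ b).val; omega
            rw [htπS, htAS, htπs, htBs, hσS]
            have h1 : ¬ ((x : WithTop C) ≠ (x : WithTop C)) := by simp
            rw [if_neg h1, if_pos (coe_ne_coe_top htx)]
            split_ifs <;> omega
          · have hux' : (σ u).val ≠ (σ x).val := fun e => hux (σ.injective (Fin.ext e))
            have huxlt : (σ u).val < (σ x).val := by omega
            have hσS : topS σ S = (u : WithTop C) := by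
              apply topS_min σ (Finset.mem_of_mem_erase huT)
              intro b hb
              by_cases hbx : b = x
              · rw [hbx]; show (σ u).val ≤ (σ x).val; omega
              · exact humin b (Finset.mem_erase.2 ⟨hbx, hb⟩)
            have hσs : topS σ (insert y (S.erase x)) = (u : WithTop C) := by
              apply topS_min σ (Finset.mem_insert_of_mem huT)
              intro b hb
              rcases Finset.mem_insert.1 hb with hby | hbT
              · rw [hby]
                show (σ u).val ≤ (σ y).val
                have : (σ u).val ≠ (σ y).val := fun e => huy (σ.injective (Fin.ext e))
                omega
              · exact humin b hbT
            rw [htπS, htAS, htπs, htBs, hσS, hσs]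
            rw [if_pos (coe_ne_coe_top (Ne.symm hux)), if_pos (coe_ne_coe_top (Ne.symm huy))]
            split_ifs <;> omega
        · -- Region 3 : t after x ; nothing changes
          have htπS : topS π S = (x : WithTop C) := by
            apply topS_min π hx
            intro b hb
            by_cases hbx : b = x
            · rw [hbx]
            · have hbt : (π t).val ≤ (π b).val := htmin b (Finset.mem_erase.2 ⟨hbx, hb⟩)
              show (π x).val ≤ (π b).val; omega
          have htAS : topS (PA π x y hpq) S = (x : WithTop C) := by
            apply topS_min _ hx
            intro b hb
            by_cases hbx : b = x
            · rw [hbx]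
            · show (PA π x y hpq x).val ≤ (PA π x y hpq b).val
              have hbt : (π t).val ≤ (π b).val := htmin b (Finset.mem_erase.2 ⟨hbx, hb⟩)
              have hAb := PA_cases π x y hpq b hbx
              omega
          have htπs : topS π (insert y (S.erase x)) = (y : WithTop C) := by
            apply topS_min π (Finset.mem_insert_self y _)
            intro b hb
            rcases Finset.mem_insert.1 hb with hby | hbT
            · rw [hby]
            · have hbt : (π t).val ≤ (π b).val := htmin b hbT
              show (π y).val ≤ (π b).val; omega
          have htBs : topS (PB π x y hpq) (insert y (S.erase x)) = (y : WithTop C) := by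
            apply topS_min _ (Finset.mem_insert_self y _)
            intro b hb
            rcases Finset.mem_insert.1 hb with hby | hbT
            · rw [hby]
            · show (PB π x y hpq y).val ≤ (PB π x y hpq b).val
              have hbt : (π t).val ≤ (π b).val := htmin b hbT
              have hBb := PB_cases π x y hpq b (by rintro rfl; exact hyT hbT)
              omega
          rw [htπS, htAS, htπs, htBs]
  · -- x ∉ S : everything agrees
    have h1 : topS (PA π x y hpq) S = topS π S := by
      apply topS_congr
      intro a ha b hb hab
      exact PA_le π x y hpq (by rintro rfl; exact hx ha) (by rintro rfl; exact hx hb) hab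
    have hyss : y ∉ S.image (Equiv.swap x y) := by
      rw [mem_swap_image, Equiv.swap_apply_right]
      exact hx
    have h2 : topS (PB π x y hpq) (S.image (Equiv.swap x y)) = topS π (S.image (Equiv.swap x y)) := by
      apply topS_congr
      intro a ha b hb hab
      exact PB_le π x y hpq (by rintro rfl; exact hyss ha) (by rintro rfl; exact hyss hb) hab
    have hSne : S ≠ {x, y} := by
      rintro rfl
      exact hx (Finset.mem_insert_self x {y})
    rw [h1, h2, if_neg hSne]
    omega

/-- Key per-set inequality, unconditional version. -/
lemma key2 (hxy : x ≠ y) (hpq : (π y).val < (π x).val) (S : Finset C) :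
    ((if topS (PA π x y hpq) S ≠ topS σ S then 1 else 0) +
     (if topS (PB π x y hpq) (S.image (Equiv.swap x y)) ≠ topS σ (S.image (Equiv.swap x y)) then 1 else 0))
    ≤ (if topS π S ≠ topS σ S then 1 else 0) +
      (if topS π (S.image (Equiv.swap x y)) ≠ topS σ (S.image (Equiv.swap x y)) then 1 else 0) +
      (if x ∈ S ∧ 2 ≤ S.card then 2 else 0) := by
  classical
  by_cases hx : x ∈ S
  · by_cases hc : 2 ≤ S.card
    · rw [if_pos (show x ∈ S ∧ 2 ≤ S.card from ⟨hx, hc⟩)]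
      split_ifs <;> omega
    · have hS1 : S = {x} := by
        have h1 : S.card = 1 := by
          have hpos : S.Nonempty := ⟨x, hx⟩
          have := Finset.card_pos.2 hpos
          omega
        obtain ⟨a, ha⟩ := Finset.card_eq_one.1 h1
        rw [ha] at hx ⊢
        rw [Finset.mem_singleton.1 hx]
        
      subst hS1
      have hsS : ({x} : Finset C).image (Equiv.swap x y) = {y} := by
        rw [Finset.image_singleton, Equiv.swap_apply_left]
      rw [hsS, topS_singleton, topS_singleton, topS_singleton, topS_singleton]
      simp
  · have h1 : topS (PA π x y hpq) S = topS π S := by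
      apply topS_congr
      intro a ha b hb hab
      exact PA_le π x y hpq (by rintro rfl; exact hx ha) (by rintro rfl; exact hx hb) hab
    have hyss : y ∉ S.image (Equiv.swap x y) := by
      rw [mem_swap_image, Equiv.swap_apply_right]
      exact hx
    have h2 : topS (PB π x y hpq) (S.image (Equiv.swap x y)) = topS π (S.image (Equiv.swap x y)) := by
      apply topS_congr
      intro a ha b hb hab
      exact PB_le π x y hpq (by rintro rfl; exact hyss ha) (by rintro rfl; exact hyss hb) hab
    rw [h1, h2]
    omega

end KeyLemmas

section Summation
variable {C : Type*} [Fintype C] [DecidableEq C]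

lemma kDist_eq (ρ σ : Ranking C) :
    kDist 3 ρ σ = ∑ S ∈ (Finset.univ : Finset C).powerset.filter (fun S => S.card ≤ 3),
      (if topS ρ S ≠ topS σ S then 1 else 0) := by
  rw [kDist, ← Finset.filter_filter, Finset.card_filter]

lemma persigma (π σ : Ranking C) (x y : C) (hxy : x ≠ y) (hpq : (π y).val < (π x).val) :
    kDist 3 (PA π x y hpq) σ + kDist 3 (PB π x y hpq) σ +
      (if (σ x).val < (σ y).val then 2 else 0)
    ≤ 2 * kDist 3 π σ +
      (if (σ x).val < (σ y).val then 0 else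
        2 * (((Finset.univ : Finset C).powerset.filter (fun S => S.card ≤ 3)).filter
            (fun S => x ∈ S ∧ 2 ≤ S.card)).card) := by
  classical
  set P3 := (Finset.univ : Finset C).powerset.filter (fun S : Finset C => S.card ≤ 3) with hP3
  have hmem : ∀ S ∈ P3, S.image (Equiv.swap x y) ∈ P3 := by
    intro S hS
    rw [hP3, Finset.mem_filter] at hS ⊢
    refine ⟨Finset.mem_powerset.2 (Finset.subset_univ _), ?_⟩
    rw [Finset.card_image_of_injective _ (Equiv.injective _)]
    exact hS.2
  have hinv : ∀ S : Finset C, (S.image (Equiv.swap x y)).image (Equiv.swap x y) = S := by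
    intro S
    rw [Finset.image_image]
    have he : ((Equiv.swap x y : C → C) ∘ (Equiv.swap x y : C → C)) = id :=
      funext fun a => Equiv.swap_apply_self x y a
    rw [he, Finset.image_id]
  have hreidx : ∀ g : Finset C → ℕ,
      (∑ S ∈ P3, g (S.image (Equiv.swap x y))) = ∑ S ∈ P3, g S := by
    intro g
    refine Finset.sum_nbij' (i := fun S => S.image (Equiv.swap x y))
      (j := fun S => S.image (Equiv.swap x y)) ?_ ?_ ?_ ?_ ?_
    · exact fun S hS => hmem S hS
    · exact fun S hS => hmem S hS
    · exact fun S _ => hinv S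
    · exact fun S _ => hinv S
    · exact fun S _ => rfl
  rw [kDist_eq, kDist_eq, kDist_eq, ← hP3]
  by_cases hgood : (σ x).val < (σ y).val
  · rw [if_pos hgood, if_pos hgood, add_zero]
    have hsum := Finset.sum_le_sum
      (fun S (_ : S ∈ P3) => key1 π σ x y hxy hpq hgood S)
    rw [Finset.sum_add_distrib, Finset.sum_add_distrib, Finset.sum_add_distrib] at hsum
    have hco : (∑ S ∈ P3, if S = ({x, y} : Finset C) then 2 else 0) = 2 := by
      rw [Finset.sum_ite_eq' P3 ({x, y} : Finset C) (fun _ => 2)]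
      rw [if_pos]
      rw [hP3, Finset.mem_filter]
      refine ⟨Finset.mem_powerset.2 (Finset.subset_univ _), ?_⟩
      rw [Finset.card_pair hxy]
      omega
    rw [hco] at hsum
    rw [hreidx (fun S => if topS (PB π x y hpq) S ≠ topS σ S then 1 else 0)] at hsum
    rw [hreidx (fun S => if topS π S ≠ topS σ S then 1 else 0)] at hsum
    omega
  · rw [if_neg hgood, if_neg hgood, add_zero]
    have hsum := Finset.sum_le_sum
      (fun S (_ : S ∈ P3) => key2 π σ x y hxy hpq S)
    rw [Finset.sum_add_distrib] at hsum
    rw [Finset.sum_add_distrib] at hsum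
    rw [Finset.sum_add_distrib] at hsum
    have hpen : (∑ S ∈ P3, if x ∈ S ∧ 2 ≤ S.card then 2 else 0)
        = 2 * (P3.filter (fun S => x ∈ S ∧ 2 ≤ S.card)).card := by
      rw [Finset.card_filter, Finset.mul_sum]
      apply Finset.sum_congr rfl
      intro S _
      split_ifs <;> rfl
    rw [hpen] at hsum
    rw [hreidx (fun S => if topS (PB π x y hpq) S ≠ topS σ S then 1 else 0)] at hsum
    rw [hreidx (fun S => if topS π S ≠ topS σ S then 1 else 0)] at hsum
    omega

lemma count_bound (x : C) :
    2 * (((Finset.univ : Finset C).powerset.filter (fun S => S.card ≤ 3)).filter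
        (fun S => x ∈ S ∧ 2 ≤ S.card)).card
    ≤ 2 * (Fintype.card C - 1) + (Fintype.card C - 1) * (Fintype.card C - 2) := by
  classical
  have h1 : (((Finset.univ : Finset C).powerset.filter (fun S => S.card ≤ 3)).filter
        (fun S => x ∈ S ∧ 2 ≤ S.card)).card
      ≤ (((Finset.univ.erase x).powerset.filter
          (fun R : Finset C => 1 ≤ R.card ∧ R.card ≤ 2))).card := by
    apply Finset.card_le_card_of_injOn (fun S => S.erase x)
    · intro S hS
      have hS : S ∈ (((Finset.univ : Finset C).powerset.filter (fun S => S.card ≤ 3)).filter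
        (fun S => x ∈ S ∧ 2 ≤ S.card)) := hS
      simp only [Finset.mem_coe, Finset.mem_filter, Finset.mem_powerset] at hS ⊢
      obtain ⟨⟨hsub, hc3⟩, hxS, hc2⟩ := hS
      refine ⟨Finset.erase_subset_erase x hsub, ?_, ?_⟩ <;>
        rw [Finset.card_erase_of_mem hxS] <;> omega
    · intro S hS S' hS' he
      simp only [Finset.coe_filter, Set.mem_setOf_eq] at hS hS'
      have hxS : x ∈ S := hS.2.1
      have hxS' : x ∈ S' := hS'.2.1
      have he' : S.erase x = S'.erase x := he
      rw [← Finset.insert_erase hxS, he', Finset.insert_erase hxS']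
  have h2 : (((Finset.univ.erase x).powerset.filter
        (fun R : Finset C => 1 ≤ R.card ∧ R.card ≤ 2))).card
      ≤ (Fintype.card C - 1) + (Fintype.card C - 1) * (Fintype.card C - 2) / 2 := by
    have hsub : ((Finset.univ.erase x).powerset.filter
          (fun R : Finset C => 1 ≤ R.card ∧ R.card ≤ 2))
        ⊆ (Finset.powersetCard 1 (Finset.univ.erase x)) ∪
          (Finset.powersetCard 2 (Finset.univ.erase x)) := by
      intro R hR
      simp only [Finset.mem_filter, Finset.mem_powerset] at hR
      obtain ⟨hsub', hc1, hc2⟩ := hR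
      simp only [Finset.mem_union, Finset.mem_powersetCard]
      rcases (by omega : R.card = 1 ∨ R.card = 2) with hc | hc
      · exact Or.inl ⟨hsub', hc⟩
      · exact Or.inr ⟨hsub', hc⟩
    have hcard : (Finset.univ.erase x).card = Fintype.card C - 1 := by
      rw [Finset.card_erase_of_mem (Finset.mem_univ x), Finset.card_univ]
    calc (((Finset.univ.erase x).powerset.filter
          (fun R : Finset C => 1 ≤ R.card ∧ R.card ≤ 2))).card
        ≤ ((Finset.powersetCard 1 (Finset.univ.erase x)) ∪
          (Finset.powersetCard 2 (Finset.univ.erase x))).card := Finset.card_le_card hsub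
      _ ≤ (Finset.powersetCard 1 (Finset.univ.erase x)).card
          + (Finset.powersetCard 2 (Finset.univ.erase x)).card := Finset.card_union_le _ _
      _ = (Fintype.card C - 1) + (Fintype.card C - 1) * (Fintype.card C - 2) / 2 := by
          rw [Finset.card_powersetCard, Finset.card_powersetCard, hcard,
            Nat.choose_one_right, Nat.choose_two_right]
          have he2 : Fintype.card C - 1 - 1 = Fintype.card C - 2 := by omega
          rw [he2]
  have h3 : 2 * ((Fintype.card C - 1) * (Fintype.card C - 2) / 2)
      ≤ (Fintype.card C - 1) * (Fintype.card C - 2) := by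
    rw [mul_comm]
    exact Nat.div_mul_le_self _ 2
  omega

lemma sum_map_ite_eq {α : Type*} (V : Multiset α) (P : α → Prop) [DecidablePred P] (c : ℕ) :
    (V.map (fun a => if P a then c else 0)).sum = c * (V.filter P).card := by
  induction V using Multiset.induction_on with
  | empty => simp
  | cons a s ih =>
    by_cases h : P a
    · rw [Multiset.map_cons, Multiset.sum_cons, ih,
        Multiset.filter_cons_of_pos _ h, Multiset.card_cons, if_pos h]
      ring
    · rw [Multiset.map_cons, Multiset.sum_cons, ih,
        Multiset.filter_cons_of_neg _ h, if_neg h]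
      omega

end Summation

section FinalHelpers
variable {α : Type*}

lemma sum_map_add' (V : Multiset α) (f g : α → ℕ) :
    (V.map (fun a => f a + g a)).sum = (V.map f).sum + (V.map g).sum := by
  induction V using Multiset.induction_on with
  | empty => simp
  | cons a s ih => simp [ih]; omega

lemma sum_map_two_mul (V : Multiset α) (f : α → ℕ) :
    (V.map (fun a => 2 * f a)).sum = 2 * (V.map f).sum := by
  induction V using Multiset.induction_on with
  | empty => simp
  | cons a s ih => simp [ih]; omega

end FinalHelpers


set_option maxHeartbeats 1000000 in
/-- 3-wise extended unanimity: if `x ≥_α y` with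
`α > 1 - 1/(n² - 3n + 4)` in an election with `n ≥ 2` candidates, then `x` is ranked
before `y` in every 3-wise median. -/
theorem stmt12 {C : Type*} [Fintype C] [DecidableEq C]
    (hn : 2 ≤ Fintype.card C)
    (V : Multiset (Ranking C)) (hV : V ≠ 0)
    (x y : C) (hxy : x ≠ y) (α : ℝ) (hα0 : 0 ≤ α) (hα1 : α ≤ 1)
    (hα : 1 - 1 / ((Fintype.card C : ℝ) ^ 2 - 3 * (Fintype.card C : ℝ) + 4) < α)
    (h : AtLeastRatio V α x y) :
    ∀ π : Ranking C, IsKMedian 3 V π → Before π x y := by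

  classical
  intro π hmed
  by_contra hnb
  have hval : ¬ ((π x).val < (π y).val) := hnb
  have hne : (π y).val ≠ (π x).val := fun e => hxy (π.injective (Fin.ext e)).symm
  have hpq : (π y).val < (π x).val := by omega
  set n := Fintype.card C with hn'
  set b := (V.filter (fun v => Before v x y)).card with hb'
  set cb := (V.filter (fun v => ¬ Before v x y)).card with hcb'
  set m := Multiset.card V with hm'
  set cX := (((Finset.univ : Finset C).powerset.filter (fun S => S.card ≤ 3)).filter
      (fun S => x ∈ S ∧ 2 ≤ S.card)).card with hcX'
  -- pointwise per-vote inequality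
  have hpt : ∀ σ ∈ V,
      (kDist 3 (PA π x y hpq) σ + kDist 3 (PB π x y hpq) σ + (if Before σ x y then 2 else 0))
      ≤ (2 * kDist 3 π σ + (if Before σ x y then 0 else 2 * cX)) := by
    intro σ _
    have hps := persigma π σ x y hxy hpq
    by_cases hgb : Before σ x y
    · have hgv : (σ x).val < (σ y).val := hgb
      rw [if_pos hgv, if_pos hgv] at hps
      rw [if_pos hgb, if_pos hgb]
      exact hps
    · have hgv : ¬ ((σ x).val < (σ y).val) := hgb
      rw [if_neg hgv, if_neg hgv] at hps
      rw [if_neg hgb, if_neg hgb]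
      exact hps
  have hsumLe := Multiset.sum_map_le_sum_map _ _ hpt
  have e1 : (V.map (fun σ => kDist 3 (PA π x y hpq) σ + kDist 3 (PB π x y hpq) σ +
        (if Before σ x y then 2 else 0))).sum
      = kDistV 3 (PA π x y hpq) V + kDistV 3 (PB π x y hpq) V + 2 * b := by
    rw [sum_map_add', sum_map_add', sum_map_ite_eq]
    rfl
  have e2 : (V.map (fun σ => 2 * kDist 3 π σ + (if Before σ x y then 0 else 2 * cX))).sum
      = 2 * kDistV 3 π V + (2 * cX) * cb := by
    rw [sum_map_add', sum_map_two_mul]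
    have hmc : (V.map (fun σ => if Before σ x y then 0 else 2 * cX))
        = V.map (fun σ => if ¬ Before σ x y then 2 * cX else 0) := by
      apply Multiset.map_congr rfl
      intro σ _
      by_cases hgb : Before σ x y <;> simp [hgb]
    rw [hmc, sum_map_ite_eq]
    rfl
  rw [e1, e2] at hsumLe
  have hA := hmed (PA π x y hpq)
  have hB := hmed (PB π x y hpq)
  have hfin : 2 * b ≤ 2 * cX * cb := by
    have h1 := hsumLe
    generalize hww : 2 * cX * cb = w at h1 ⊢
    omega
  have hbc : b + cb = m := by
    have hh := congrArg Multiset.card (Multiset.filter_add_not (fun v => Before v x y) V)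
    rw [Multiset.card_add] at hh
    exact hh
  have hbm : b ≤ m := by omega
  have hm1 : 1 ≤ m := by
    rw [hm']
    exact Multiset.card_pos.2 hV
  have hcount := count_bound (C := C) x
  rw [← hcX', ← hn'] at hcount
  -- move to the reals
  have hnR : (2:ℝ) ≤ (n:ℝ) := by exact_mod_cast hn
  have hm0 : (0:ℝ) < (m:ℝ) := by exact_mod_cast hm1
  have hbR : α * (m:ℝ) ≤ (b:ℝ) := h
  set t : ℝ := (n:ℝ)^2 - 3*(n:ℝ) + 4 with ht'
  have hα' : 1 - 1/t < α := hα
  have ht2 : (2:ℝ) ≤ t := by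
    have h9 : (0:ℝ) ≤ ((n:ℝ)-1) * ((n:ℝ)-2) :=
      mul_nonneg (by linarith) (by linarith)
    rw [ht']
    nlinarith
  have htpos : (0:ℝ) < t := by linarith
  have hcXR : ((2 * cX : ℕ) : ℝ) ≤ 2*((n:ℝ)-1) + ((n:ℝ)-1)*((n:ℝ)-2) := by
    have hc1 : ((n - 1 : ℕ) : ℝ) = (n:ℝ) - 1 := by
      rw [Nat.cast_sub (by omega)]; simp
    have hc2 : ((n - 2 : ℕ) : ℝ) = (n:ℝ) - 2 := by
      rw [Nat.cast_sub (by omega)]; simp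
    calc ((2 * cX : ℕ) : ℝ) ≤ ((2 * (n-1) + (n-1)*(n-2) : ℕ) : ℝ) := by exact_mod_cast hcount
      _ = 2*((n:ℝ)-1) + ((n:ℝ)-1)*((n:ℝ)-2) := by
          push_cast [hc1, hc2]; ring
  have ht1 : 2*((n:ℝ)-1) + ((n:ℝ)-1)*((n:ℝ)-2) ≤ 2*(t - 1) := by
    rw [ht']
    rcases (by omega : n = 2 ∨ 3 ≤ n) with h2 | h3
    · rw [h2]; norm_num
    · have h3R : (3:ℝ) ≤ (n:ℝ) := by exact_mod_cast h3
      nlinarith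
  have hmbR : (0:ℝ) ≤ (m:ℝ) - b := by
    have : (b:ℝ) ≤ (m:ℝ) := by exact_mod_cast hbm
    linarith
  have hcbR : ((cb : ℕ) : ℝ) = (m:ℝ) - b := by
    have h0 : (b:ℝ) + (cb:ℝ) = (m:ℝ) := by exact_mod_cast hbc
    linarith
  have h7 : (2:ℝ) * b ≤ 2*(t-1) * ((m:ℝ) - b) := by
    have hq : ((2 * b : ℕ) : ℝ) ≤ ((2 * cX * cb : ℕ) : ℝ) := by exact_mod_cast hfin
    have hq2 : ((2 * cX * cb : ℕ) : ℝ) = ((2 * cX : ℕ) : ℝ) * ((m:ℝ) - b) := by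
      push_cast
      push_cast at hcbR
      rw [hcbR]
    rw [hq2] at hq
    have hq3 : ((2 * cX : ℕ) : ℝ) * ((m:ℝ) - b) ≤ (2*(t-1)) * ((m:ℝ) - b) :=
      mul_le_mul_of_nonneg_right (le_trans hcXR ht1) hmbR
    push_cast at hq hq3
    linarith
  have h10 : t - 1 < t * α := by
    have hh := mul_lt_mul_of_pos_left hα' htpos
    rw [mul_sub, mul_one, mul_one_div, div_self htpos.ne'] at hh
    exact hh
  have h11 : (t-1) * (m:ℝ) < t * b := by
    have ha1 : (t-1) * (m:ℝ) < (t*α) * m := mul_lt_mul_of_pos_right h10 hm0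
    have ha2 : t * (α * m) ≤ t * b := mul_le_mul_of_nonneg_left hbR htpos.le
    nlinarith
  nlinarith [h7, h11]
end

section
/- There exists an election with exactly 3 candidates and a candidate x such that x ≥_{3/5} y for every other candidate y, yet x is not ranked first in some 3-wise median of the election. (Hence the smallest α such that 'x ≥_α y for all y ≠ x implies x is ranked first in every 3-wise median' for 3-candidate elections satisfies α > 3/5.) -/
open Finset

/-!
Take the five votes `0 ≻ 1 ≻ 2` (twice), `1 ≻ 0 ≻ 2` and `2 ≻ 1 ≻ 0` (twice). Candidate `1` beats
each of `0` and `2` in exactly three of the five votes. On three candidates the 3-wise distance is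
the Kendall-tau distance plus one when the top candidates differ, and `1` is on top in only one
vote while `0` and `2` are on top in two each; this extra term lets `0 ≻ 1 ≻ 2` reach the minimum
total distance `10` over all six rankings.
-/

def Ranking.ofPerm {n : ℕ} (σ : Equiv.Perm (Fin n)) : Ranking (Fin n) :=
  σ.trans (finCongr (Fintype.card_fin n).symm)

theorem not_rankedFirst_of_before {C : Type*} [Fintype C] {π : Ranking C} {x y : C}
    (h : Before π y x) : ¬ RankedFirst π x := fun hx =>
  lt_asymm h (hx y (ne_of_apply_ne π (ne_of_lt h)))

theorem atLeastRatio_of_le {C : Type*} [Fintype C] {V : Multiset (Ranking C)}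
    {s : ℝ} {x y : C} {k n : ℕ} (hV : Multiset.card V = n) (hxy : votesBefore V x y = k)
    (hs : s * n ≤ k) : AtLeastRatio V s x y := by
  rwa [AtLeastRatio, hV, hxy]

namespace Counterexample

-- `Ranking.ofPerm σ` puts candidate `c` at position `σ c`; these `σ` are involutions, so they also
-- list the candidates from the top: `0 ≻ 1 ≻ 2`, `1 ≻ 0 ≻ 2`, `2 ≻ 1 ≻ 0`.
def profile : Multiset (Ranking (Fin 3)) :=
  ({1, 1, Equiv.swap 0 1, Equiv.swap 0 2, Equiv.swap 0 2} : Multiset (Equiv.Perm (Fin 3))).map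
    Ranking.ofPerm

theorem card_profile : Multiset.card profile = 5 := rfl

theorem votesBefore_one (y : Fin 3) (hy : y ≠ 1) : votesBefore profile 1 y = 3 := by
  revert y; decide

theorem kDistV_three_ofPerm_one : kDistV 3 (Ranking.ofPerm 1) profile = 10 := by decide

theorem ten_le_kDistV_three (σ : Ranking (Fin 3)) : 10 ≤ kDistV 3 σ profile := by
  revert σ; decide

theorem isKMedian_ofPerm_one : IsKMedian 3 profile (Ranking.ofPerm 1) := fun σ =>
  kDistV_three_ofPerm_one ▸ ten_le_kDistV_three σ

end Counterexample

/-- there is a 3-candidate election and a candidate `x` with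
`x ≥_{3/5} y` for every other `y`, yet `x` is not ranked first in some 3-wise median. -/
theorem stmt13 :
    ∃ (V : Multiset (Ranking (Fin 3))) (x : Fin 3),
      V ≠ 0 ∧
      (∀ y : Fin 3, y ≠ x → AtLeastRatio V (3 / 5) x y) ∧
      ∃ π : Ranking (Fin 3), IsKMedian 3 V π ∧ ¬ RankedFirst π x := by
  open Counterexample in
  refine ⟨profile, 1, Multiset.card_pos.mp (by rw [card_profile]; norm_num), fun y hy => ?_,
    Ranking.ofPerm 1, isKMedian_ofPerm_one, not_rankedFirst_of_before (y := 0) (by decide)⟩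
  exact atLeastRatio_of_le card_profile (votesBefore_one y hy) (by norm_num)
end
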